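/- arXiv:1304.0489 — 12 statements merged into one kernel-verified Lean document; each statement's English description precedes it below -/
import Mathlib

section
/- Let (Ω, P) be a probability space and {A_n} a sequence of events with ∑_{n=1}^∞ P(A_n) = ∞. Then P(limsup A_n) ≥ limsup_{n→∞} (∑_{k=1}^n P(A_k))² / (∑_{i=1}^n ∑_{j=1}^n P(A_i ∩ A_j)). -/
open MeasureTheory Filter Set Topology
open scoped ENNReal

/-!
With `X = ∑_{k ∈ s} 1_{A_k}`, Cauchy–Schwarz applied to `X = X · 1_{⋃_{k ∈ s} A_k}` gives
`(∑ P(A_k))² = E[X]² ≤ E[X²] P(⋃_{k ∈ s} A_k) = (∑∑ P(A_i ∩ A_j)) P(⋃_{k ∈ s} A_k)`.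
Write `S_n = ∑_{k<n} P(A_k)` and `D_n = ∑_{i,j<n} P(A_i ∩ A_j)`, so that `D_n ≥ S_n²` by the same inequality.
Applied to `s = [m, n)`, the inequality bounds `(S_n - S_m)² / D_n` by the probability of the tail
`⋃_{k ≥ m} A_k`, and `S_n² / D_n` exceeds it by at most `2 S_m / S_n`, which tends to zero since
`S_n → ∞`. Letting `m → ∞`, the tails decrease to `limsup A_n`.
-/

theorem ENNReal.sq_lintegral_mul_le {α : Type*} [MeasurableSpace α] (μ : Measure α)
    {f g : α → ℝ≥0∞} (hf : AEMeasurable f μ) (hg : AEMeasurable g μ) :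
    (∫⁻ a, f a * g a ∂μ) ^ 2 ≤ (∫⁻ a, f a ^ 2 ∂μ) * ∫⁻ a, g a ^ 2 ∂μ := by
  have h := ENNReal.lintegral_mul_le_Lp_mul_Lq μ Real.HolderConjugate.two_two hf hg
  simp only [ENNReal.rpow_two, Pi.mul_apply] at h
  calc (∫⁻ a, f a * g a ∂μ) ^ 2
      ≤ ((∫⁻ a, f a ^ 2 ∂μ) ^ (1 / 2 : ℝ) * (∫⁻ a, g a ^ 2 ∂μ) ^ (1 / 2 : ℝ)) ^ 2 := by gcongr
    _ = (∫⁻ a, f a ^ 2 ∂μ) * ∫⁻ a, g a ^ 2 ∂μ := by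
      rw [mul_pow, ← ENNReal.rpow_natCast, ← ENNReal.rpow_natCast, ← ENNReal.rpow_mul,
        ← ENNReal.rpow_mul]
      norm_num

lemma sq_div_le_sub_sq_div_add {a x D : ℝ} (ha : 0 ≤ a) (hax : a ≤ x) (hxD : x ^ 2 ≤ D) :
    x ^ 2 / D ≤ (x - a) ^ 2 / D + 2 * a / x := by
  rcases (ha.trans hax).eq_or_lt with rfl | hx
  · obtain rfl : a = 0 := le_antisymm hax ha
    simp
  have hD : 0 < D := (pow_pos hx 2).trans_le hxD
  rw [div_add_div _ _ hD.ne' hx.ne', div_le_div_iff₀ hD (by positivity)]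
  nlinarith [mul_nonneg (mul_nonneg ha (sub_nonneg.2 hxD)) hD.le,
    mul_nonneg (mul_nonneg (sq_nonneg a) hx.le) hD.le]

section FiniteFamily

variable {Ω ι : Type*} [MeasurableSpace Ω] {μ : Measure Ω} {A : ι → Set Ω}

theorem sq_sum_measure_le_mul_measure_biUnion (hA : ∀ i, MeasurableSet (A i)) (s : Finset ι) :
    (∑ k ∈ s, μ (A k)) ^ 2 ≤ (∑ i ∈ s, ∑ j ∈ s, μ (A i ∩ A j)) * μ (⋃ k ∈ s, A k) := by
  set U := ⋃ k ∈ s, A k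
  have hU : MeasurableSet U := s.measurableSet_biUnion fun k _ => hA k
  have hAA (i j : ι) : MeasurableSet (A i ∩ A j) := (hA i).inter (hA j)
  set X : Ω → ℝ≥0∞ := fun ω => ∑ k ∈ s, (A k).indicator 1 ω
  have hX : Measurable X := Finset.measurable_sum _ fun k _ => measurable_one.indicator (hA k)
  have hX_sq (ω : Ω) : X ω ^ 2 = ∑ i ∈ s, ∑ j ∈ s, (A i ∩ A j).indicator 1 ω := by
    simp only [X, sq, Finset.sum_mul_sum, inter_indicator_one, Pi.mul_apply]
  have hX_U (ω : Ω) : X ω * U.indicator 1 ω = X ω := by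
    by_cases hω : ω ∈ U
    · simp [hω]
    · rw [indicator_of_notMem hω, mul_zero, eq_comm]
      simp only [U, mem_iUnion, not_exists] at hω
      exact Finset.sum_eq_zero fun k hk => indicator_of_notMem (hω k hk) _
  have hU_sq (ω : Ω) : U.indicator (1 : Ω → ℝ≥0∞) ω ^ 2 = U.indicator 1 ω := by
    rw [sq, ← Pi.mul_apply, ← inter_indicator_one, inter_self]
  calc (∑ k ∈ s, μ (A k)) ^ 2 = (∫⁻ ω, X ω * U.indicator 1 ω ∂μ) ^ 2 := by
        simp_rw [hX_U, X]
        rw [lintegral_finsetSum _ fun k _ => measurable_one.indicator (hA k)]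
        simp [lintegral_indicator_one (hA _)]
    _ ≤ (∫⁻ ω, X ω ^ 2 ∂μ) * ∫⁻ ω, U.indicator 1 ω ^ 2 ∂μ :=
        ENNReal.sq_lintegral_mul_le μ hX.aemeasurable (measurable_one.indicator hU).aemeasurable
    _ = (∑ i ∈ s, ∑ j ∈ s, μ (A i ∩ A j)) * μ U := by
        simp_rw [hX_sq, hU_sq]
        rw [lintegral_finsetSum _ fun i _ => Finset.measurable_sum _ fun j _ =>
          measurable_one.indicator (hAA i j), lintegral_indicator_one hU]
        congr 1
        refine Finset.sum_congr rfl fun i _ => ?_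
        rw [lintegral_finsetSum _ fun j _ => measurable_one.indicator (hAA i j)]
        simp [lintegral_indicator_one (hAA i _)]

variable [IsFiniteMeasure μ]

theorem sq_sum_toReal_le_mul_measure_biUnion (hA : ∀ i, MeasurableSet (A i)) (s : Finset ι) :
    (∑ k ∈ s, (μ (A k)).toReal) ^ 2 ≤
      (∑ i ∈ s, ∑ j ∈ s, (μ (A i ∩ A j)).toReal) * (μ (⋃ k ∈ s, A k)).toReal := by
  simp only [← ENNReal.toReal_sum fun _ _ => measure_ne_top μ _]
  have hsum_ne_top (i : ι) : ∑ j ∈ s, μ (A i ∩ A j) ≠ ∞ :=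
    ENNReal.sum_ne_top.2 fun _ _ => measure_ne_top μ _
  rw [← ENNReal.toReal_sum fun i _ => hsum_ne_top i, ← ENNReal.toReal_pow, ← ENNReal.toReal_mul]
  exact ENNReal.toReal_mono
    (ENNReal.mul_ne_top (ENNReal.sum_ne_top.2 fun i _ => hsum_ne_top i) (measure_ne_top μ _))
    (sq_sum_measure_le_mul_measure_biUnion hA s)

theorem sq_sum_toReal_div_le_measure_biUnion (hA : ∀ i, MeasurableSet (A i)) (s : Finset ι)
    {D : ℝ} (hD : ∑ i ∈ s, ∑ j ∈ s, (μ (A i ∩ A j)).toReal ≤ D) :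
    (∑ k ∈ s, (μ (A k)).toReal) ^ 2 / D ≤ (μ (⋃ k ∈ s, A k)).toReal :=
  div_le_of_le_mul₀
    ((Finset.sum_nonneg fun _ _ => Finset.sum_nonneg fun _ _ => ENNReal.toReal_nonneg).trans hD)
    (by positivity) <|
    (sq_sum_toReal_le_mul_measure_biUnion hA s).trans <| by rw [mul_comm]; gcongr

theorem sq_sum_toReal_le_sum_sum_measure_inter [IsProbabilityMeasure μ]
    (hA : ∀ i, MeasurableSet (A i)) (s : Finset ι) :
    (∑ k ∈ s, (μ (A k)).toReal) ^ 2 ≤ ∑ i ∈ s, ∑ j ∈ s, (μ (A i ∩ A j)).toReal :=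
  (sq_sum_toReal_le_mul_measure_biUnion hA s).trans <|
    mul_le_of_le_one_right (by positivity) measureReal_le_one

end FiniteFamily

section Sequence

variable {Ω : Type*} [MeasurableSpace Ω] {μ : Measure Ω} {A : ℕ → Set Ω}

theorem sq_sum_range_div_le_measure_iUnion_ge_add [IsProbabilityMeasure μ]
    (hA : ∀ n, MeasurableSet (A n)) {m n : ℕ} (hmn : m ≤ n) :
    (∑ k ∈ Finset.range n, (μ (A k)).toReal) ^ 2 /
        (∑ i ∈ Finset.range n, ∑ j ∈ Finset.range n, (μ (A i ∩ A j)).toReal) ≤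
      (μ (⋃ k ≥ m, A k)).toReal +
        2 * (∑ k ∈ Finset.range m, (μ (A k)).toReal) / ∑ k ∈ Finset.range n, (μ (A k)).toReal := by
  have hsub : Finset.Ico m n ⊆ Finset.range n := fun k hk => by simp at hk ⊢; omega
  refine (sq_div_le_sub_sq_div_add (by positivity)
    (Finset.sum_le_sum_of_subset_of_nonneg (Finset.range_subset_range.2 hmn)
      fun _ _ _ => ENNReal.toReal_nonneg)
    (sq_sum_toReal_le_sum_sum_measure_inter hA _)).trans ?_
  gcongr
  rw [← Finset.sum_Ico_eq_sub _ hmn]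
  refine (sq_sum_toReal_div_le_measure_biUnion hA _ ?_).trans ?_
  · calc _ ≤ ∑ i ∈ Finset.Ico m n, ∑ j ∈ Finset.range n, (μ (A i ∩ A j)).toReal :=
          Finset.sum_le_sum fun i _ =>
            Finset.sum_le_sum_of_subset_of_nonneg hsub fun _ _ _ => ENNReal.toReal_nonneg
      _ ≤ _ := Finset.sum_le_sum_of_subset_of_nonneg hsub fun _ _ _ => by positivity
  · exact ENNReal.toReal_mono (measure_ne_top μ _) <| measure_mono <|
      iUnion₂_subset fun k hk => subset_iUnion₂_of_subset k (Finset.mem_Ico.1 hk).1 subset_rfl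

theorem limsup_sq_sum_range_div_le_measure_iUnion_ge [IsProbabilityMeasure μ]
    (hA : ∀ n, MeasurableSet (A n))
    (hdiv : Tendsto (fun n => ∑ k ∈ Finset.range n, (μ (A k)).toReal) atTop atTop) (m : ℕ) :
    limsup (fun n => (∑ k ∈ Finset.range n, (μ (A k)).toReal) ^ 2 /
        (∑ i ∈ Finset.range n, ∑ j ∈ Finset.range n, (μ (A i ∩ A j)).toReal)) atTop ≤
      (μ (⋃ k ≥ m, A k)).toReal := by
  have herr : Tendsto (fun n => (μ (⋃ k ≥ m, A k)).toReal +
      2 * (∑ k ∈ Finset.range m, (μ (A k)).toReal) / ∑ k ∈ Finset.range n, (μ (A k)).toReal)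
      atTop (𝓝 (μ (⋃ k ≥ m, A k)).toReal) := by
    simpa using tendsto_const_nhds.add (tendsto_const_nhds.div_atTop hdiv)
  refine (limsup_le_limsup (eventually_atTop.2 ⟨m, fun n hmn =>
    sq_sum_range_div_le_measure_iUnion_ge_add hA hmn⟩)
    (isCoboundedUnder_le_of_le atTop fun n => by positivity) herr.isBoundedUnder_le).trans_eq
    herr.limsup_eq

theorem tendsto_measure_iUnion_ge_limsup [IsFiniteMeasure μ] (hA : ∀ n, MeasurableSet (A n)) :
    Tendsto (fun m => μ (⋃ k ≥ m, A k)) atTop (𝓝 (μ (limsup A atTop))) := by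
  rw [limsup_eq_iInf_iSup_of_nat]
  exact tendsto_measure_iInter_atTop
    (fun m => (MeasurableSet.iUnion fun k => MeasurableSet.iUnion fun _ => hA k).nullMeasurableSet)
    (fun _ _ h => iUnion₂_mono' fun k hk => ⟨k, h.trans hk, subset_rfl⟩) ⟨0, measure_ne_top μ _⟩

end Sequence

theorem erdos_renyi_bound {Ω : Type*} [MeasurableSpace Ω] (μ : Measure Ω)
    [IsProbabilityMeasure μ] (A : ℕ → Set Ω) (hA : ∀ n, MeasurableSet (A n))
    (hdiv : Tendsto (fun n => ∑ k ∈ Finset.range n, (μ (A k)).toReal) atTop atTop) :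
    (μ (Filter.limsup A atTop)).toReal ≥
      Filter.limsup (fun n =>
        (∑ k ∈ Finset.range n, (μ (A k)).toReal) ^ 2 /
          (∑ i ∈ Finset.range n, ∑ j ∈ Finset.range n, (μ (A i ∩ A j)).toReal)) atTop :=
  ge_of_tendsto' ((ENNReal.tendsto_toReal (measure_ne_top μ _)).comp
    (tendsto_measure_iUnion_ge_limsup hA)) (limsup_sq_sum_range_div_le_measure_iUnion_ge hA hdiv)
end

section
/- Let (Ω, P) be a probability space, {A_n} a sequence of events with P(A_n) > 0 and ∑_{n=1}^∞ P(A_n) = ∞. Set α_n = (∑_{i=1}^n 1_{A_i}) / (∑_{i=1}^n P(A_i)). Then for every p ∈ (0,1), P(limsup A_n) ≥ (limsup_{n→∞} E[α_n^p])^{1/(1−p)}. -/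
/-!
Fix `m` and write `D_n = ∑_{i<n} P(A i)`. Among `A 0, …, A (n-1)` at most `m` events with
index `< m` occur, and `m / D_n → 0`. The remaining count `T` vanishes off the tail event
`B_m = ⋃_{i ≥ m} A i` and `E[T] ≤ D_n`; bounding `x ^ p` on `B_m` by its tangent line at
`1 / P(B_m)` gives `E[(T / D_n) ^ p] ≤ P(B_m) ^ (1 - p)`. Hence
`limsup E[α_n ^ p] ≤ P(B_m) ^ (1 - p)` for every `m`, and `P(B_m)` decreases to `P(limsup A)`.
-/

open MeasureTheory Filter Set Topology

lemma Real.rpow_le_tangent_at_inv {x c p : ℝ} (hx : 0 ≤ x) (hc : 0 < c) (hp0 : 0 ≤ p)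
    (hp1 : p ≤ 1) :
    x ^ p ≤ (1 - p) * c ^ (-p) + p * c ^ (1 - p) * x := by
  have bernoulli : (c * x) ^ p ≤ 1 + p * (c * x - 1) := by
    simpa using rpow_one_add_le_one_add_mul_self (s := c * x - 1) (by nlinarith) hp0 hp1
  calc x ^ p = c ^ (-p) * (c * x) ^ p := by
        rw [Real.mul_rpow hc.le hx, ← mul_assoc, ← Real.rpow_add hc]; simp
    _ ≤ c ^ (-p) * (1 + p * (c * x - 1)) := by gcongr
    _ = (1 - p) * c ^ (-p) + p * c ^ (1 - p) * x := by
        rw [show 1 - p = -p + 1 by ring, Real.rpow_add hc, Real.rpow_one]; ring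

lemma Finset.sum_range_le_add_sum_Ico {g : ℕ → ℝ} (hg1 : ∀ i, g i ≤ 1)
    (m n : ℕ) : ∑ i ∈ Finset.range n, g i ≤ m + ∑ i ∈ Finset.Ico m n, g i := by
  rcases le_total m n with hmn | hnm
  · rw [← Finset.sum_range_add_sum_Ico g hmn]
    gcongr
    simpa using Finset.sum_le_card_nsmul (Finset.range m) g 1 fun i _ => hg1 i
  · rw [Finset.Ico_eq_empty_of_le hnm, Finset.sum_empty, add_zero]
    calc ∑ i ∈ Finset.range n, g i ≤ n := by
          simpa using Finset.sum_le_card_nsmul (Finset.range n) g 1 fun i _ => hg1 i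
      _ ≤ m := by exact_mod_cast hnm

lemma sum_indicator_one_nonneg {Ω ι : Type*} (A : ι → Set Ω) (s : Finset ι) (ω : Ω) :
    0 ≤ ∑ i ∈ s, (A i).indicator (1 : Ω → ℝ) ω :=
  Finset.sum_nonneg fun _ _ => indicator_nonneg (fun _ _ => zero_le_one) ω

section

variable {Ω : Type*} [MeasurableSpace Ω] {μ : Measure Ω}

lemma MeasureTheory.Integrable.rpow_of_le_one [IsFiniteMeasure μ] {f : Ω → ℝ} {p : ℝ}
    (hf : Integrable f μ) (hf0 : 0 ≤ f) (hp0 : 0 ≤ p) (hp1 : p ≤ 1) :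
    Integrable (fun ω => f ω ^ p) μ := by
  have hfp : MemLp f (ENNReal.ofReal p) μ :=
    (memLp_one_iff_integrable.2 hf).mono_exponent (by simpa using hp1)
  simpa [ENNReal.toReal_ofReal hp0, Real.norm_of_nonneg (hf0 _)] using hfp.integrable_norm_rpow'

lemma integral_rpow_le_measureReal_rpow [IsFiniteMeasure μ] {f : Ω → ℝ} {B : Set Ω} {p : ℝ}
    (hB : MeasurableSet B) (hf : Integrable f μ) (hf0 : 0 ≤ f) (hfB : Function.support f ⊆ B)
    (hf1 : ∫ ω, f ω ∂μ ≤ 1) (hp0 : 0 < p) (hp1 : p ≤ 1) :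
    ∫ ω, f ω ^ p ∂μ ≤ μ.real B ^ (1 - p) := by
  set c := μ.real B
  have hf_off : ∀ ω ∉ B, f ω = 0 := fun ω hω => Function.notMem_support.1 (hω ∘ (hfB ·))
  rcases measureReal_nonneg.eq_or_lt with hc | hc
  · have hf_ae : ∀ᵐ ω ∂μ, f ω ^ p = 0 := by
      have hB0 : μ B = 0 := (measureReal_eq_zero_iff (measure_ne_top μ B)).1 hc.symm
      filter_upwards [measure_eq_zero_iff_ae_notMem.1 hB0] with ω hω
      rw [hf_off ω hω, Real.zero_rpow hp0.ne']
    rw [integral_eq_zero_of_ae hf_ae]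
    positivity
  have hpointwise :
      ∀ ω, f ω ^ p ≤ (1 - p) * c ^ (-p) * B.indicator 1 ω + p * c ^ (1 - p) * f ω := by
    intro ω
    by_cases hω : ω ∈ B
    · simpa [hω] using Real.rpow_le_tangent_at_inv (hf0 ω) hc hp0.le hp1
    · simp [hω, hf_off ω hω, Real.zero_rpow hp0.ne']
  have hB_int : Integrable (fun ω => (1 - p) * c ^ (-p) * B.indicator 1 ω) μ :=
    ((integrable_const 1).indicator hB).const_mul _
  calc ∫ ω, f ω ^ p ∂μ
      ≤ ∫ ω, ((1 - p) * c ^ (-p) * B.indicator 1 ω + p * c ^ (1 - p) * f ω) ∂μ :=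
        integral_mono_of_nonneg (Eventually.of_forall fun ω => Real.rpow_nonneg (hf0 ω) p)
          (hB_int.add (hf.const_mul _)) (Eventually.of_forall hpointwise)
    _ = (1 - p) * c ^ (-p) * c + p * c ^ (1 - p) * ∫ ω, f ω ∂μ := by
        rw [integral_add hB_int (hf.const_mul _), integral_const_mul, integral_const_mul,
          integral_indicator_one hB]
    _ ≤ (1 - p) * c ^ (-p) * c + p * c ^ (1 - p) * 1 := by gcongr
    _ = c ^ (1 - p) := by
        rw [mul_assoc (1 - p), ← Real.rpow_add_one hc.ne', neg_add_eq_sub]; ring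

lemma tendsto_measure_biUnion_ge_limsup [IsFiniteMeasure μ] {A : ℕ → Set Ω}
    (hA : ∀ i, MeasurableSet (A i)) :
    Tendsto (fun m => μ (⋃ i ≥ m, A i)) atTop (𝓝 (μ (limsup A atTop))) := by
  rw [limsup_eq_iInf_iSup_of_nat]
  exact tendsto_measure_iInter_atTop
    (fun m => (MeasurableSet.biUnion (to_countable _) fun i _ => hA i).nullMeasurableSet)
    (fun m k hmk => biUnion_mono (fun i (hi : k ≤ i) => hmk.trans hi) fun _ _ => le_rfl)
    ⟨0, measure_ne_top μ _⟩

lemma integrable_sum_indicator_one [IsFiniteMeasure μ] {ι : Type*} {A : ι → Set Ω}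
    (hA : ∀ i, MeasurableSet (A i)) (s : Finset ι) :
    Integrable (fun ω => ∑ i ∈ s, (A i).indicator (1 : Ω → ℝ) ω) μ :=
  integrable_finsetSum _ fun i _ => (integrable_const 1).indicator (hA i)

lemma integral_sum_indicator_one [IsFiniteMeasure μ] {ι : Type*} {A : ι → Set Ω}
    (hA : ∀ i, MeasurableSet (A i)) (s : Finset ι) :
    ∫ ω, ∑ i ∈ s, (A i).indicator (1 : Ω → ℝ) ω ∂μ =
      ∑ i ∈ s, μ.real (A i) := by
  rw [integral_finsetSum _ fun i _ => (integrable_const 1).indicator (hA i)]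
  exact Finset.sum_congr rfl fun i _ => integral_indicator_one (hA i)

lemma integral_rpow_sum_Ico_indicator_div_le [IsFiniteMeasure μ] {A : ℕ → Set Ω}
    (hA : ∀ i, MeasurableSet (A i)) {p D : ℝ} (hp0 : 0 < p) (hp1 : p ≤ 1) {m n : ℕ}
    (hD : ∑ i ∈ Finset.Ico m n, μ.real (A i) ≤ D) :
    ∫ ω, ((∑ i ∈ Finset.Ico m n, (A i).indicator (1 : Ω → ℝ) ω) / D) ^ p ∂μ ≤
      μ.real (⋃ i ≥ m, A i) ^ (1 - p) := by
  have hD0 : 0 ≤ D := (Finset.sum_nonneg fun _ _ => measureReal_nonneg).trans hD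
  refine integral_rpow_le_measureReal_rpow (MeasurableSet.biUnion (to_countable _) fun i _ => hA i)
    ((integrable_sum_indicator_one hA _).div_const D)
    (fun ω => div_nonneg (sum_indicator_one_nonneg A _ ω) hD0)
    ?_ ?_ hp0 hp1
  · intro ω hω
    obtain ⟨i, hi, hωi⟩ := Finset.exists_ne_zero_of_sum_ne_zero (left_ne_zero_of_mul hω)
    exact mem_biUnion (Finset.mem_Ico.1 hi).1 (mem_of_indicator_ne_zero hωi)
  · rw [integral_div, integral_sum_indicator_one hA]
    exact div_le_one_of_le₀ hD hD0

end

lemma integral_rpow_count_div_le {Ω : Type*} [MeasurableSpace Ω] {μ : Measure Ω}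
    [IsProbabilityMeasure μ] {A : ℕ → Set Ω} (hA : ∀ i, MeasurableSet (A i)) {p : ℝ}
    (hp0 : 0 < p) (hp1 : p ≤ 1) (m n : ℕ) :
    ∫ ω, ((∑ i ∈ Finset.range n, (A i).indicator (1 : Ω → ℝ) ω) /
        ∑ i ∈ Finset.range n, μ.real (A i)) ^ p ∂μ ≤
      (m / ∑ i ∈ Finset.range n, μ.real (A i)) ^ p + μ.real (⋃ i ≥ m, A i) ^ (1 - p) := by
  set D := ∑ i ∈ Finset.range n, μ.real (A i)
  set S := fun ω => ∑ i ∈ Finset.range n, (A i).indicator (1 : Ω → ℝ) ω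
  set T := fun ω => ∑ i ∈ Finset.Ico m n, (A i).indicator (1 : Ω → ℝ) ω
  have hD : 0 ≤ D := Finset.sum_nonneg fun _ _ => measureReal_nonneg
  have hS0 : ∀ ω, 0 ≤ S ω := sum_indicator_one_nonneg A _
  have hT0 : ∀ ω, 0 ≤ T ω := sum_indicator_one_nonneg A _
  have hTp_int : Integrable (fun ω => (T ω / D) ^ p) μ :=
    ((integrable_sum_indicator_one hA _).div_const D).rpow_of_le_one
      (fun ω => div_nonneg (hT0 ω) hD) hp0.le hp1
  have hpointwise : ∀ ω, (S ω / D) ^ p ≤ (m / D) ^ p + (T ω / D) ^ p := fun ω =>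
    calc (S ω / D) ^ p ≤ ((m + T ω) / D) ^ p := by
          refine Real.rpow_le_rpow (div_nonneg (hS0 ω) hD)
            (div_le_div_of_nonneg_right ?_ hD) hp0.le
          exact Finset.sum_range_le_add_sum_Ico
            (fun i => indicator_le_self' (fun _ _ => zero_le_one) ω) m n
      _ ≤ (m / D) ^ p + (T ω / D) ^ p := by
          rw [add_div]
          exact Real.rpow_add_le_add_rpow (by positivity) (div_nonneg (hT0 ω) hD) hp0.le hp1
  calc _ ≤ ∫ ω, ((m / D) ^ p + (T ω / D) ^ p) ∂μ :=
        integral_mono_of_nonneg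
          (Eventually.of_forall fun ω => Real.rpow_nonneg (div_nonneg (hS0 ω) hD) p)
          ((integrable_const _).add hTp_int) (Eventually.of_forall hpointwise)
    _ = (m / D) ^ p + ∫ ω, (T ω / D) ^ p ∂μ := by
        rw [integral_add (integrable_const _) hTp_int, integral_const, probReal_univ, one_smul]
    _ ≤ _ := by
        gcongr
        refine integral_rpow_sum_Ico_indicator_div_le hA hp0 hp1
          (Finset.sum_le_sum_of_subset_of_nonneg ?_ fun _ _ _ => measureReal_nonneg)
        exact Finset.range_eq_Ico n ▸ Finset.Ico_subset_Ico_left (Nat.zero_le m)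

theorem mori_szekely_bound_lt_one_general {Ω : Type*} [MeasurableSpace Ω] (μ : Measure Ω)
    [IsProbabilityMeasure μ] (A : ℕ → Set Ω) (hA : ∀ n, MeasurableSet (A n))
    (hdiv : Tendsto (fun n => ∑ k ∈ Finset.range n, (μ (A k)).toReal) atTop atTop)
    (p : ℝ) (hp : p ∈ Set.Ioo (0 : ℝ) 1) :
    (μ (Filter.limsup A atTop)).toReal ≥
      (Filter.limsup (fun n =>
          ∫ ω, ((∑ i ∈ Finset.range n, (A i).indicator (1 : Ω → ℝ) ω) /
              (∑ i ∈ Finset.range n, (μ (A i)).toReal)) ^ p ∂μ) atTop) ^ (1 / (1 - p)) := by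
  obtain ⟨hp0, hp1⟩ := hp
  set D := fun n => ∑ k ∈ Finset.range n, (μ (A k)).toReal
  set F := fun n =>
    ∫ ω, ((∑ i ∈ Finset.range n, (A i).indicator (1 : Ω → ℝ) ω) / D n) ^ p ∂μ
  set c : ℕ → ℝ := fun m => μ.real (⋃ i ≥ m, A i) ^ (1 - p)
  have hF0 : ∀ n, 0 ≤ F n := fun n => integral_nonneg fun ω =>
    Real.rpow_nonneg (div_nonneg (sum_indicator_one_nonneg A _ ω)
      (Finset.sum_nonneg fun _ _ => ENNReal.toReal_nonneg)) p
  have hF_le : ∀ m n, F n ≤ (m / D n) ^ p + c m := integral_rpow_count_div_le hA hp0 hp1.le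
  have hF_le_tendsto : ∀ m : ℕ, Tendsto (fun n => (m / D n) ^ p + c m) atTop (𝓝 (c m)) := by
    intro m
    simpa [Real.zero_rpow hp0.ne'] using
      ((tendsto_const_nhds.div_atTop hdiv).rpow_const (Or.inr hp0.le)).add_const (c m)
  have hlimsup_le : ∀ m, limsup F atTop ≤ c m := fun m =>
    (limsup_le_limsup (Eventually.of_forall (hF_le m)) (isCoboundedUnder_le_of_le atTop hF0)
      (hF_le_tendsto m).isBoundedUnder_le).trans_eq (hF_le_tendsto m).limsup_eq
  have hc : Tendsto c atTop (𝓝 ((μ (limsup A atTop)).toReal ^ (1 - p))) :=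
    ((ENNReal.tendsto_toReal (measure_ne_top _ _)).comp
      (tendsto_measure_biUnion_ge_limsup hA)).rpow_const (Or.inr (sub_nonneg.2 hp1.le))
  have hlimsup_nonneg : 0 ≤ limsup F atTop :=
    le_limsup_of_frequently_le (Frequently.of_forall hF0)
      ((hF_le_tendsto 0).isBoundedUnder_le.mono_le (Eventually.of_forall (hF_le 0)))
  rw [ge_iff_le, one_div, Real.rpow_inv_le_iff_of_pos hlimsup_nonneg ENNReal.toReal_nonneg
    (sub_pos.2 hp1)]
  exact ge_of_tendsto' hc hlimsup_le

theorem mori_szekely_bound_lt_one {Ω : Type*} [MeasurableSpace Ω] (μ : Measure Ω)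
    [IsProbabilityMeasure μ] (A : ℕ → Set Ω) (hA : ∀ n, MeasurableSet (A n))
    (hpos : ∀ n, 0 < μ (A n))
    (hdiv : Tendsto (fun n => ∑ k ∈ Finset.range n, (μ (A k)).toReal) atTop atTop)
    (p : ℝ) (hp : p ∈ Set.Ioo (0 : ℝ) 1) :
    (μ (Filter.limsup A atTop)).toReal ≥
      (Filter.limsup (fun n =>
          ∫ ω, ((∑ i ∈ Finset.range n, (A i).indicator (1 : Ω → ℝ) ω) /
              (∑ i ∈ Finset.range n, (μ (A i)).toReal)) ^ p ∂μ) atTop) ^ (1 / (1 - p)) :=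
  mori_szekely_bound_lt_one_general μ A hA hdiv p hp
end

section
/- Let (Ω, P) be a probability space, {A_n} events with P(A_n) > 0 and ∑ P(A_n) = ∞, and α_n = (∑_{i=1}^n 1_{A_i}) / (∑_{i=1}^n P(A_i)). Then for every p > 1, P(limsup A_n) ≥ (limsup_{n→∞} E[α_n^p])^{1/(1−p)}. -/
/-!
Write `α_n` for the number of the events `A_0, …, A_{n-1}` that occur, divided by its mean `S_n`,
so `E[α_n] = 1`. Fix `N` and `B = ⋃_{i ≥ N} A_i`. Off `B` at most `N` events occur, hence
`E[α_n; B] ≥ 1 - N / S_n → 1`, while Hölder against `1_B` gives `E[α_n; B]^p ≤ E[α_n^p] P(B)^{p-1}`.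
So `1 ≤ L P(B)^{p-1}` with `L = limsup E[α_n^p]`, i.e. `P(B) ≥ L^{1/(1-p)}`, and `P(B)` decreases to
`P(limsup A_n)` as `N → ∞`.
-/

open MeasureTheory Filter Set Topology

theorem le_limsup_mul_of_tendsto {ι : Type*} {l : Filter ι} [NeBot l] {u g : ι → ℝ} {a m : ℝ}
    (hm : 0 ≤ m) (hg₀ : 0 ≤ g) (hg : IsBoundedUnder (· ≤ ·) l g) (hu : Tendsto u l (𝓝 a))
    (hug : ∀ᶠ n in l, u n ≤ g n * m) : a ≤ limsup g l * m := by
  have hmono : Monotone (· * m) := fun _ _ h => mul_le_mul_of_nonneg_right h hm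
  calc a = limsup u l := hu.limsup_eq.symm
    _ ≤ limsup (fun n => g n * m) l :=
        limsup_le_limsup hug hu.isCoboundedUnder_le (hmono.isBoundedUnder_le_comp hg)
    _ = limsup g l * m :=
        (hmono.map_limsup_of_continuousAt g (continuous_mul_const m).continuousAt hg
          (isCoboundedUnder_le_of_le l hg₀)).symm

theorem Real.rpow_one_div_one_sub_le {x y p : ℝ} (hp : 1 < p) (hy : 0 ≤ y)
    (h : 1 ≤ x * y ^ (p - 1)) : x ^ (1 / (1 - p)) ≤ y := by
  have hx : 0 < x := pos_of_mul_pos_left (one_pos.trans_le h) (Real.rpow_nonneg hy _)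
  have hp' : p - 1 ≠ 0 := (sub_pos.2 hp).ne'
  calc x ^ (1 / (1 - p)) = x⁻¹ ^ (p - 1)⁻¹ := by
        rw [Real.inv_rpow hx.le, ← Real.rpow_neg hx.le, one_div, neg_inv, neg_sub]
    _ ≤ (y ^ (p - 1)) ^ (p - 1)⁻¹ :=
        Real.rpow_le_rpow (inv_nonneg.2 hx.le) ((inv_le_iff_one_le_mul₀' hx).2 h)
          (inv_nonneg.2 (sub_pos.2 hp).le)
    _ = y := Real.rpow_rpow_inv hy hp'

section

variable {Ω : Type*} [MeasurableSpace Ω] {μ : Measure Ω}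

theorem setIntegral_rpow_le_integral_rpow_mul_measureReal [IsFiniteMeasure μ] {f : Ω → ℝ}
    {p : ℝ} (hp : 1 < p) (hf : 0 ≤ f) (hfp : MemLp f (ENNReal.ofReal p) μ) {s : Set Ω}
    (hs : MeasurableSet s) :
    (∫ ω in s, f ω ∂μ) ^ p ≤ (∫ ω, f ω ^ p ∂μ) * μ.real s ^ (p - 1) := by
  set q := p.conjExponent
  have hpq : p.HolderConjugate q := .conjExponent hp
  have hind_pow : ∀ ω, s.indicator (1 : Ω → ℝ) ω ^ q = s.indicator 1 ω := fun ω => by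
    by_cases h : ω ∈ s <;> simp [h, hpq.symm.pos.ne']
  have holder : ∫ ω in s, f ω ∂μ ≤ (∫ ω, f ω ^ p ∂μ) ^ (1 / p) * μ.real s ^ (1 / q) := by
    have h := integral_mul_le_Lp_mul_Lq_of_nonneg (g := s.indicator 1) hpq (.of_forall hf)
      (.of_forall (indicator_nonneg fun _ _ => zero_le_one)) hfp
      (memLp_indicator_const _ hs 1 (.inr (measure_ne_top μ s)))
    simpa only [hind_pow, integral_indicator_one hs, ← indicator_mul_right, Pi.one_apply, mul_one,
      integral_indicator hs] using h
  calc (∫ ω in s, f ω ∂μ) ^ p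
      ≤ ((∫ ω, f ω ^ p ∂μ) ^ (1 / p) * μ.real s ^ (1 / q)) ^ p :=
        Real.rpow_le_rpow (setIntegral_nonneg hs fun ω _ => hf ω) holder (by linarith)
    _ = (∫ ω, f ω ^ p ∂μ) * μ.real s ^ (p - 1) := by
        have hI : 0 ≤ ∫ ω, f ω ^ p ∂μ := integral_nonneg fun ω => Real.rpow_nonneg (hf ω) p
        rw [Real.mul_rpow (Real.rpow_nonneg hI _) (Real.rpow_nonneg measureReal_nonneg _),
          ← Real.rpow_mul hI, ← Real.rpow_mul measureReal_nonneg, one_div_mul_cancel hpq.ne_zero,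
          Real.rpow_one]
        congr 2
        simp only [q, Real.conjExponent]
        field_simp [(sub_pos.2 hp).ne']

theorem tendsto_measureReal_iUnion_ge_limsup [IsFiniteMeasure μ] {A : ℕ → Set Ω}
    (hA : ∀ n, MeasurableSet (A n)) :
    Tendsto (fun N => μ.real (⋃ i ≥ N, A i)) atTop (𝓝 (μ.real (limsup A atTop))) := by
  have hanti : Antitone fun N => ⋃ i ≥ N, A i := fun N M h =>
    biUnion_subset_biUnion_left fun i hi => le_trans h hi
  rw [limsup_eq_iInf_iSup_of_nat]
  simp only [iInf_eq_iInter, iSup_eq_iUnion]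
  exact (ENNReal.tendsto_toReal (measure_ne_top μ _)).comp <| tendsto_measure_iInter_atTop
    (fun N => (MeasurableSet.biUnion (to_countable _) fun i _ => hA i).nullMeasurableSet)
    hanti ⟨0, measure_ne_top μ _⟩

end

section Counting

variable {Ω : Type*} {A : ℕ → Set Ω} {n N : ℕ} {ω : Ω}

noncomputable def occurrenceCount (A : ℕ → Set Ω) (n : ℕ) (ω : Ω) : ℝ :=
  ∑ i ∈ Finset.range n, (A i).indicator 1 ω

open Classical in
theorem occurrenceCount_eq_card :
    occurrenceCount A n ω = ((Finset.range n).filter (ω ∈ A ·)).card := by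
  simp only [occurrenceCount, Finset.natCast_card_filter, indicator_apply, Pi.one_apply]

theorem occurrenceCount_nonneg : 0 ≤ occurrenceCount A n ω :=
  Finset.sum_nonneg fun _ _ => indicator_nonneg (fun _ _ => zero_le_one) ω

theorem occurrenceCount_le : occurrenceCount A n ω ≤ n := by
  classical
  rw [occurrenceCount_eq_card]
  exact_mod_cast (Finset.card_filter_le _ _).trans_eq (Finset.card_range n)

theorem occurrenceCount_le_of_notMem_iUnion (h : ω ∉ ⋃ i ≥ N, A i) :
    occurrenceCount A n ω ≤ N := by
  classical
  rw [occurrenceCount_eq_card]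
  have hsub : (Finset.range n).filter (ω ∈ A ·) ⊆ Finset.range N := fun i hi =>
    Finset.mem_range.2 <| not_le.1 fun hNi => h <| mem_biUnion hNi (Finset.mem_filter.1 hi).2
  exact_mod_cast (Finset.card_le_card hsub).trans_eq (Finset.card_range N)

end Counting

section

variable {Ω : Type*} [MeasurableSpace Ω] {μ : Measure Ω} {A : ℕ → Set Ω}

noncomputable def expectedCount (μ : Measure Ω) (A : ℕ → Set Ω) (n : ℕ) : ℝ :=
  ∑ i ∈ Finset.range n, μ.real (A i)

/-- The paper's `α_n`, with the events indexed from `0`. -/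
noncomputable def normalizedCount (μ : Measure Ω) (A : ℕ → Set Ω) (n : ℕ) (ω : Ω) : ℝ :=
  occurrenceCount A n ω / expectedCount μ A n

theorem measurable_occurrenceCount (hA : ∀ n, MeasurableSet (A n)) (n : ℕ) :
    Measurable (occurrenceCount A n) :=
  Finset.measurable_sum _ fun i _ => measurable_const.indicator (hA i)

theorem memLp_occurrenceCount [IsFiniteMeasure μ] (hA : ∀ n, MeasurableSet (A n)) (n : ℕ)
    (q : ENNReal) : MemLp (occurrenceCount A n) q μ :=
  .of_bound (measurable_occurrenceCount hA n).aestronglyMeasurable n <| .of_forall fun _ => by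
    rw [Real.norm_of_nonneg occurrenceCount_nonneg]
    exact occurrenceCount_le

theorem integral_occurrenceCount [IsFiniteMeasure μ] (hA : ∀ n, MeasurableSet (A n)) (n : ℕ) :
    ∫ ω, occurrenceCount A n ω ∂μ = expectedCount μ A n := by
  unfold occurrenceCount
  rw [integral_finsetSum _ fun i _ => (integrable_const 1).indicator (hA i)]
  exact Finset.sum_congr rfl fun i _ => integral_indicator_one (hA i)

theorem expectedCount_sub_le_setIntegral_occurrenceCount [IsProbabilityMeasure μ]
    (hA : ∀ n, MeasurableSet (A n)) (n N : ℕ) :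
    expectedCount μ A n - N ≤ ∫ ω in ⋃ i ≥ N, A i, occurrenceCount A n ω ∂μ := by
  have hB : MeasurableSet (⋃ i ≥ N, A i) := .biUnion (to_countable _) fun i _ => hA i
  have hint := memLp_one_iff_integrable.1 (memLp_occurrenceCount (μ := μ) hA n 1)
  have hcompl : ∫ ω in (⋃ i ≥ N, A i)ᶜ, occurrenceCount A n ω ∂μ ≤ N :=
    calc _ ≤ ∫ _ in (⋃ i ≥ N, A i)ᶜ, (N : ℝ) ∂μ :=
          setIntegral_mono_on hint.integrableOn (integrableOn_const (measure_ne_top _ _)) hB.compl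
            fun _ hω => occurrenceCount_le_of_notMem_iUnion hω
      _ = μ.real (⋃ i ≥ N, A i)ᶜ * N := by rw [setIntegral_const, smul_eq_mul]
      _ ≤ N := mul_le_of_le_one_left (Nat.cast_nonneg N) measureReal_le_one
  rw [← integral_occurrenceCount hA n, ← integral_add_compl hB hint]
  linarith

theorem normalizedCount_nonneg {n : ℕ} {ω : Ω} : 0 ≤ normalizedCount μ A n ω :=
  div_nonneg occurrenceCount_nonneg (Finset.sum_nonneg fun _ _ => measureReal_nonneg)

theorem memLp_normalizedCount [IsFiniteMeasure μ] (hA : ∀ n, MeasurableSet (A n)) (n : ℕ)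
    (q : ENNReal) : MemLp (normalizedCount μ A n) q μ := by
  show MemLp (fun ω => occurrenceCount A n ω / expectedCount μ A n) q μ
  simpa only [div_eq_mul_inv] using (memLp_occurrenceCount hA n q).mul_const _

theorem one_sub_div_le_setIntegral_normalizedCount [IsProbabilityMeasure μ]
    (hA : ∀ n, MeasurableSet (A n)) {n : ℕ} (hS : 0 < expectedCount μ A n) (N : ℕ) :
    1 - N / expectedCount μ A n ≤ ∫ ω in ⋃ i ≥ N, A i, normalizedCount μ A n ω ∂μ := by
  unfold normalizedCount
  rw [integral_div, le_div_iff₀ hS, sub_mul, one_mul, div_mul_cancel₀ _ hS.ne']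
  exact expectedCount_sub_le_setIntegral_occurrenceCount hA n N

theorem one_le_limsup_mul_measureReal_iUnion [IsProbabilityMeasure μ]
    (hA : ∀ n, MeasurableSet (A n)) (hdiv : Tendsto (expectedCount μ A) atTop atTop) {p : ℝ}
    (hp : 1 < p)
    (hbdd : IsBoundedUnder (· ≤ ·) atTop fun n => ∫ ω, normalizedCount μ A n ω ^ p ∂μ) (N : ℕ) :
    1 ≤ limsup (fun n => ∫ ω, normalizedCount μ A n ω ^ p ∂μ) atTop *
      μ.real (⋃ i ≥ N, A i) ^ (p - 1) := by
  refine le_limsup_mul_of_tendsto (u := fun n => (1 - N / expectedCount μ A n) ^ p)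
    (Real.rpow_nonneg measureReal_nonneg _)
    (fun n => integral_nonneg fun _ => Real.rpow_nonneg normalizedCount_nonneg p) hbdd ?_ ?_
  · have h : Tendsto (fun n => 1 - N / expectedCount μ A n) atTop (𝓝 1) := by
      simpa using tendsto_const_nhds.sub (tendsto_const_nhds.div_atTop hdiv)
    simpa using h.rpow_const (.inr (zero_le_one.trans hp.le))
  · filter_upwards [hdiv.eventually_gt_atTop (N : ℝ)] with n hn
    have hS : 0 < expectedCount μ A n := (Nat.cast_nonneg N).trans_lt hn
    calc (1 - N / expectedCount μ A n) ^ p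
        ≤ (∫ ω in ⋃ i ≥ N, A i, normalizedCount μ A n ω ∂μ) ^ p :=
          Real.rpow_le_rpow (sub_nonneg.2 ((div_le_one hS).2 hn.le))
            (one_sub_div_le_setIntegral_normalizedCount hA hS N) (by linarith)
      _ ≤ _ := setIntegral_rpow_le_integral_rpow_mul_measureReal hp
          (fun _ => normalizedCount_nonneg) (memLp_normalizedCount hA n _)
          (.biUnion (to_countable _) fun i _ => hA i)

end

theorem mori_szekely_bound_gt_one_general {Ω : Type*} [MeasurableSpace Ω] (μ : Measure Ω)
    [IsProbabilityMeasure μ] (A : ℕ → Set Ω) (hA : ∀ n, MeasurableSet (A n))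
    (hdiv : Tendsto (fun n => ∑ k ∈ Finset.range n, (μ (A k)).toReal) atTop atTop)
    (p : ℝ) (hp : 1 < p) :
    (μ (Filter.limsup A atTop)).toReal ≥
      (Filter.limsup (fun n =>
          ∫ ω, ((∑ i ∈ Finset.range n, (A i).indicator (1 : Ω → ℝ) ω) /
              (∑ i ∈ Finset.range n, (μ (A i)).toReal)) ^ p ∂μ) atTop) ^ (1 / (1 - p)) := by
  change μ.real (limsup A atTop) ≥
    limsup (fun n => ∫ ω, normalizedCount μ A n ω ^ p ∂μ) atTop ^ (1 / (1 - p))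
  by_cases hbdd : IsBoundedUnder (· ≤ ·) atTop fun n => ∫ ω, normalizedCount μ A n ω ^ p ∂μ
  · exact ge_of_tendsto' (tendsto_measureReal_iUnion_ge_limsup hA) fun N =>
      Real.rpow_one_div_one_sub_le hp measureReal_nonneg
        (one_le_limsup_mul_measureReal_iUnion hA hdiv hp hbdd N)
  · -- an unbounded real `limsup` is `0` by convention, and `0 ^ (1 / (1 - p)) = 0`
    rw [Real.limsup_of_not_isBoundedUnder hbdd,
      Real.zero_rpow (one_div_ne_zero (sub_ne_zero.2 hp.ne))]
    exact measureReal_nonneg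

theorem mori_szekely_bound_gt_one {Ω : Type*} [MeasurableSpace Ω] (μ : Measure Ω)
    [IsProbabilityMeasure μ] (A : ℕ → Set Ω) (hA : ∀ n, MeasurableSet (A n))
    (hpos : ∀ n, 0 < μ (A n))
    (hdiv : Tendsto (fun n => ∑ k ∈ Finset.range n, (μ (A k)).toReal) atTop atTop)
    (p : ℝ) (hp : 1 < p) :
    (μ (Filter.limsup A atTop)).toReal ≥
      (Filter.limsup (fun n =>
          ∫ ω, ((∑ i ∈ Finset.range n, (A i).indicator (1 : Ω → ℝ) ω) /
              (∑ i ∈ Finset.range n, (μ (A i)).toReal)) ^ p ∂μ) atTop) ^ (1 / (1 - p)) :=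
  mori_szekely_bound_gt_one_general μ A hA hdiv p hp
end

section
/- With α_n = (∑_{i=1}^n 1_{A_i}) / (∑_{i=1}^n P(A_i)) for events A_n of positive probability with ∑ P(A_n) = ∞, one has sup_{p ∈ (0,∞)\{1}} (limsup_{n→∞} E[α_n^p])^{1/(1−p)} = lim_{p→0+} limsup_{n→∞} E[α_n^p]. -/
/-!
For `X ≥ 0` with `E X = 1`, Hölder's inequality makes `p ↦ log E[X ^ p]` convex on `[0, ∞)`, and it
vanishes at `p = 0` and `p = 1`. Comparing slopes against the point `1` gives, for `0 < q < 1` and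
`q < p ≠ 1`, the bound `E[X ^ p] ^ ((1 - q) / (1 - p)) ≤ E[X ^ q]`, which survives taking `limsup`
along `α_n` (the moments of order `q < 1` stay in `[0, 1]`). Letting `q → 0` bounds every
`(limsup E[α_n ^ p]) ^ (1 / (1 - p))` by `L`, while these values tend to `L ^ 1 = L` as `p → 0`.
-/

open MeasureTheory Filter Set Topology

section Moments

variable {Ω : Type*} [MeasurableSpace Ω] {μ : Measure Ω} {X : Ω → ℝ}

theorem integral_rpow_nonneg (hX : 0 ≤ᵐ[μ] X) (p : ℝ) : 0 ≤ ∫ ω, X ω ^ p ∂μ :=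
  integral_nonneg_of_ae (hX.mono fun _ h => Real.rpow_nonneg h p)

theorem integral_rpow_mul_add_mul_le (hX : 0 ≤ᵐ[μ] X) {a b s t : ℝ} (ha : 0 ≤ a) (hb : 0 ≤ b)
    (hs : 0 ≤ s) (ht : 0 ≤ t) (hst : s + t = 1)
    (hXa : Integrable (fun ω => X ω ^ a) μ) (hXb : Integrable (fun ω => X ω ^ b) μ) :
    ∫ ω, X ω ^ (s * a + t * b) ∂μ ≤ (∫ ω, X ω ^ a ∂μ) ^ s * (∫ ω, X ω ^ b ∂μ) ^ t := by
  have hpow {c : ℝ} : 0 ≤ᵐ[μ] fun ω => X ω ^ c := hX.mono fun ω h => Real.rpow_nonneg h c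
  have hXa0 := integral_rpow_nonneg hX a
  have hXb0 := integral_rpow_nonneg hX b
  by_cases hint : Integrable (fun ω => X ω ^ (s * a + t * b)) μ
  swap
  · rw [integral_undef hint]; positivity
  rw [← ENNReal.ofReal_le_ofReal_iff (by positivity), ENNReal.ofReal_mul (by positivity),
    ← ENNReal.ofReal_rpow_of_nonneg hXa0 hs, ← ENNReal.ofReal_rpow_of_nonneg hXb0 ht,
    ofReal_integral_eq_lintegral_ofReal hint hpow, ofReal_integral_eq_lintegral_ofReal hXa hpow,
    ofReal_integral_eq_lintegral_ofReal hXb hpow]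
  calc ∫⁻ ω, ENNReal.ofReal (X ω ^ (s * a + t * b)) ∂μ
      = ∫⁻ ω, ENNReal.ofReal (X ω ^ a) ^ s * ENNReal.ofReal (X ω ^ b) ^ t ∂μ := by
        refine lintegral_congr_ae (hX.mono fun ω (h : 0 ≤ X ω) => ?_)
        dsimp only
        rw [ENNReal.ofReal_rpow_of_nonneg (Real.rpow_nonneg h a) hs,
          ENNReal.ofReal_rpow_of_nonneg (Real.rpow_nonneg h b) ht,
          ← ENNReal.ofReal_mul (by positivity), ← Real.rpow_mul h, ← Real.rpow_mul h,
          ← Real.rpow_add_of_nonneg h (by positivity) (by positivity), mul_comm a, mul_comm b]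
    _ ≤ _ := ENNReal.lintegral_mul_norm_pow_le hXa.aemeasurable.ennreal_ofReal
        hXb.aemeasurable.ennreal_ofReal hs ht hst

theorem integral_rpow_le_integral_rpow_rpow (hX : 0 ≤ᵐ[μ] X) (hX1 : ∫ ω, X ω ∂μ = 1)
    {p q : ℝ} (hq0 : 0 ≤ q) (hqp : q < p) (hp1 : p ≤ 1) (hXq : Integrable (fun ω => X ω ^ q) μ) :
    ∫ ω, X ω ^ p ∂μ ≤ (∫ ω, X ω ^ q ∂μ) ^ ((1 - p) / (1 - q)) := by
  have hq1 : 0 < 1 - q := by linarith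
  have h := integral_rpow_mul_add_mul_le hX hq0 zero_le_one (div_nonneg (sub_nonneg.2 hp1) hq1.le)
    (div_nonneg (sub_nonneg.2 hqp.le) hq1.le) (by field_simp; ring) hXq
    (by simpa using Integrable.of_integral_ne_zero (hX1 ▸ one_ne_zero))
  have hexp : (1 - p) / (1 - q) * q + (p - q) / (1 - q) * 1 = p := by field_simp; ring
  rw [hexp] at h
  simpa [hX1] using h

theorem rpow_le_integral_rpow_of_integral_rpow_le (hX : 0 ≤ᵐ[μ] X) (hX1 : ∫ ω, X ω ∂μ = 1)
    {p q c : ℝ} (hq0 : 0 ≤ q) (hq1 : q < 1) (hp1 : 1 < p) (hXq : Integrable (fun ω => X ω ^ q) μ)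
    (hXp : Integrable (fun ω => X ω ^ p) μ) (hc : ∫ ω, X ω ^ p ∂μ ≤ c) :
    c ^ ((1 - q) / (1 - p)) ≤ ∫ ω, X ω ^ q ∂μ := by
  have hpq : p - q ≠ 0 := by linarith
  set s := (p - 1) / (p - q) with s_def
  set t := (1 - q) / (p - q) with t_def
  have hs : 0 < s := div_pos (by linarith) (by linarith)
  have ht : 0 < t := div_pos (by linarith) (by linarith)
  have hexp : s * q + t * p = 1 := by rw [s_def, t_def]; field_simp; ring
  have h := integral_rpow_mul_add_mul_le hX hq0 (by linarith) hs.le ht.le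
    (by rw [s_def, t_def]; field_simp; ring) hXq hXp
  rw [hexp] at h
  simp only [Real.rpow_one, hX1] at h
  have hMq := integral_rpow_nonneg hX q
  have hMp := integral_rpow_nonneg hX p
  have h' : 1 ≤ (∫ ω, X ω ^ q ∂μ) ^ s * c ^ t := h.trans (by gcongr)
  have hc0 : 0 < c := by
    rcases (hMp.trans hc).eq_or_lt with rfl | hc0
    · rw [Real.zero_rpow ht.ne', mul_zero] at h'; linarith
    · exact hc0
  have hcs : (c ^ t)⁻¹ ≤ (∫ ω, X ω ^ q ∂μ) ^ s :=
    (inv_le_iff_one_le_mul₀ (by positivity)).2 h'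
  calc c ^ ((1 - q) / (1 - p)) = ((c ^ t)⁻¹) ^ s⁻¹ := by
        rw [← Real.rpow_neg hc0.le, ← Real.rpow_mul hc0.le]
        congr 1
        rw [s_def, t_def, ← neg_sub p 1, div_neg, inv_div, neg_mul,
          div_mul_div_cancel₀ hpq]
    _ ≤ ((∫ ω, X ω ^ q ∂μ) ^ s) ^ s⁻¹ := by gcongr
    _ = ∫ ω, X ω ^ q ∂μ := Real.rpow_rpow_inv hMq hs.ne'

theorem integrable_rpow_of_le [IsFiniteMeasure μ] (hXm : AEMeasurable X μ) (hX0 : ∀ ω, 0 ≤ X ω)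
    {C : ℝ} (hXC : ∀ ω, X ω ≤ C) {p : ℝ} (hp : 0 ≤ p) : Integrable (fun ω => X ω ^ p) μ :=
  .of_bound (hXm.pow_const p).aestronglyMeasurable (C ^ p) (ae_of_all _ fun ω => by
    rw [Real.norm_of_nonneg (Real.rpow_nonneg (hX0 ω) p)]
    exact Real.rpow_le_rpow (hX0 ω) (hXC ω) hp)

variable [IsProbabilityMeasure μ]

theorem integral_rpow_le_one (hX : 0 ≤ᵐ[μ] X) (hX1 : ∫ ω, X ω ∂μ = 1) {q : ℝ} (hq0 : 0 ≤ q)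
    (hq1 : q ≤ 1) : ∫ ω, X ω ^ q ∂μ ≤ 1 := by
  have h := integral_rpow_mul_add_mul_le hX zero_le_one le_rfl hq0 (sub_nonneg.2 hq1)
    (add_sub_cancel q 1) (by simpa using Integrable.of_integral_ne_zero (hX1 ▸ one_ne_zero))
    (by simp)
  simpa [hX1] using h

end Moments

/-- `limsup_n E[X_n ^ p]`; when the moments are not bounded above, this is Lean's junk value `0`. -/
noncomputable def momentLimsup {Ω : Type*} [MeasurableSpace Ω] (μ : Measure Ω)
    (X : ℕ → Ω → ℝ) (p : ℝ) : ℝ :=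
  limsup (fun n => ∫ ω, X n ω ^ p ∂μ) atTop

section MomentLimsup

variable {Ω : Type*} [MeasurableSpace Ω] {μ : Measure Ω} {X : ℕ → Ω → ℝ}
  (hX : ∀ n, 0 ≤ᵐ[μ] X n)
include hX

theorem momentLimsup_nonneg (p : ℝ) : 0 ≤ momentLimsup μ X p := by
  by_cases hbdd : IsBoundedUnder (· ≤ ·) atTop (fun n => ∫ ω, X n ω ^ p ∂μ)
  · exact le_limsup_of_frequently_le
      (Frequently.of_forall fun n => integral_rpow_nonneg (hX n) p) hbdd
  · exact (Real.limsup_of_not_isBoundedUnder hbdd).ge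

variable [IsProbabilityMeasure μ] (hmean : ∀ᶠ n in atTop, ∫ ω, X n ω ∂μ = 1)
include hmean

theorem isBoundedUnder_integral_rpow {q : ℝ} (hq0 : 0 ≤ q) (hq1 : q ≤ 1) :
    IsBoundedUnder (· ≤ ·) atTop (fun n => ∫ ω, X n ω ^ q ∂μ) :=
  isBoundedUnder_of_eventually_le (hmean.mono fun n hn => integral_rpow_le_one (hX n) hn hq0 hq1)

variable (hint : ∀ n, ∀ p : ℝ, 0 < p → Integrable (fun ω => X n ω ^ p) μ)
include hint

theorem rpow_momentLimsup_le {p q : ℝ} (hq0 : 0 < q) (hq1 : q < 1) (hqp : q < p) (hp1 : p ≠ 1) :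
    momentLimsup μ X p ^ ((1 - q) / (1 - p)) ≤ momentLimsup μ X q := by
  have hbddq := isBoundedUnder_integral_rpow hX hmean hq0.le hq1.le
  have hFp := momentLimsup_nonneg hX p
  have hFq := momentLimsup_nonneg hX q
  rcases hp1.lt_or_gt with hp1 | hp1
  · set θ := (1 - p) / (1 - q) with hθ
    have hθ0 : 0 < θ := div_pos (by linarith) (by linarith)
    have hle : ∀ c ∈ Ioi (momentLimsup μ X q), momentLimsup μ X p ≤ c ^ θ := fun c hc => by
      refine limsup_le_of_le (isCoboundedUnder_le_of_le atTop fun n =>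
        integral_rpow_nonneg (hX n) p) ?_
      filter_upwards [hmean, eventually_lt_of_limsup_lt hc hbddq] with n hn hnc
      calc ∫ ω, X n ω ^ p ∂μ ≤ (∫ ω, X n ω ^ q ∂μ) ^ θ :=
            integral_rpow_le_integral_rpow_rpow (hX n) hn hq0.le hqp hp1.le (hint n q hq0)
        _ ≤ c ^ θ := by gcongr; exact integral_rpow_nonneg (hX n) q
    have hcont := (Real.continuousAt_rpow_const (momentLimsup μ X q) θ (Or.inr hθ0.le)).tendsto
    have hpq : momentLimsup μ X p ≤ momentLimsup μ X q ^ θ :=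
      ge_of_tendsto (hcont.mono_left nhdsWithin_le_nhds) (eventually_nhdsWithin_of_forall hle)
    rw [show (1 - q) / (1 - p) = θ⁻¹ by rw [hθ, inv_div]]
    exact (Real.rpow_inv_le_iff_of_pos hFp hFq hθ0).2 hpq
  · rcases hFp.eq_or_lt with hFp0 | hFp0
    · rw [← hFp0, Real.zero_rpow (div_ne_zero (by linarith) (by linarith))]
      exact hFq
    have hbddp : IsBoundedUnder (· ≤ ·) atTop (fun n => ∫ ω, X n ω ^ p ∂μ) := by
      by_contra h
      exact hFp0.ne' (Real.limsup_of_not_isBoundedUnder h)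
    have hge : ∀ c ∈ Ioi (momentLimsup μ X p), c ^ ((1 - q) / (1 - p)) ≤ momentLimsup μ X q :=
      fun c hc => by
        refine le_limsup_of_frequently_le (Eventually.frequently ?_) hbddq
        filter_upwards [hmean, eventually_lt_of_limsup_lt hc hbddp] with n hn hnc
        exact rpow_le_integral_rpow_of_integral_rpow_le (hX n) hn hq0.le hq1 hp1 (hint n q hq0)
          (hint n p (by linarith)) hnc.le
    have hcont := (Real.continuousAt_rpow_const (momentLimsup μ X p) ((1 - q) / (1 - p))
      (Or.inl hFp0.ne')).tendsto
    exact le_of_tendsto (hcont.mono_left nhdsWithin_le_nhds) (eventually_nhdsWithin_of_forall hge)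

variable {L : ℝ} (hL : Tendsto (momentLimsup μ X) (𝓝[>] 0) (𝓝 L))
include hL

theorem rpow_momentLimsup_le_of_tendsto {p : ℝ} (hp0 : 0 < p) (hp1 : p ≠ 1) :
    momentLimsup μ X p ^ (1 / (1 - p)) ≤ L := by
  have hexp : Tendsto (fun q : ℝ => (1 - q) / (1 - p)) (𝓝[>] 0) (𝓝 (1 / (1 - p))) :=
    ((by fun_prop : Continuous fun q : ℝ => (1 - q) / (1 - p)).tendsto' 0 _ (by simp)).mono_left
      nhdsWithin_le_nhds
  have hlhs := (Real.continuousAt_const_rpow' (a := momentLimsup μ X p)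
    (one_div_ne_zero (sub_ne_zero.2 hp1.symm))).tendsto.comp hexp
  refine le_of_tendsto_of_tendsto hlhs hL ?_
  filter_upwards [Ioo_mem_nhdsGT (lt_min hp0 one_pos)] with q hq
  exact rpow_momentLimsup_le hX hmean hint hq.1 (hq.2.trans_le (min_le_right _ _))
    (hq.2.trans_le (min_le_left _ _)) hp1

theorem sSup_rpow_momentLimsup_eq :
    sSup {x : ℝ | ∃ p : ℝ, 0 < p ∧ p ≠ 1 ∧ x = momentLimsup μ X p ^ (1 / (1 - p))} = L := by
  have hφ : Tendsto (fun p => momentLimsup μ X p ^ (1 / (1 - p))) (𝓝[>] 0) (𝓝 L) := by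
    have h1 : Tendsto (fun p : ℝ => 1 / (1 - p)) (𝓝[>] 0) (𝓝 1) := by
      have := (by fun_prop (disch := norm_num) : ContinuousAt (fun p : ℝ => 1 / (1 - p)) 0)
      simpa using this.tendsto.mono_left nhdsWithin_le_nhds
    simpa using hL.rpow h1 (Or.inr one_pos)
  refine csSup_eq_of_forall_le_of_forall_lt_exists_gt ⟨_, 1 / 2, by norm_num, by norm_num, rfl⟩
    ?_ fun w hw => ?_
  · rintro x ⟨p, hp0, hp1, rfl⟩
    exact rpow_momentLimsup_le_of_tendsto hX hmean hint hL hp0 hp1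
  · obtain ⟨p, hwp, hp0, hp1⟩ := ((hφ.eventually (eventually_gt_nhds hw)).and
      (Ioo_mem_nhdsGT one_pos)).exists
    exact ⟨_, ⟨p, hp0, hp1.ne, rfl⟩, hwp⟩

end MomentLimsup

theorem mori_szekely_sup_eq_limit_general {Ω : Type*} [MeasurableSpace Ω] (μ : Measure Ω)
    [IsProbabilityMeasure μ] (A : ℕ → Set Ω) (hA : ∀ n, MeasurableSet (A n))
    (hdiv : Tendsto (fun n => ∑ k ∈ Finset.range n, (μ (A k)).toReal) atTop atTop)
    (L : ℝ)
    (hL : Tendsto (fun p : ℝ =>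
        Filter.limsup (fun n =>
          ∫ ω, ((∑ i ∈ Finset.range n, (A i).indicator (1 : Ω → ℝ) ω) /
              (∑ i ∈ Finset.range n, (μ (A i)).toReal)) ^ p ∂μ) atTop)
      (nhdsWithin 0 (Set.Ioi 0)) (nhds L)) :
    sSup {x : ℝ | ∃ p : ℝ, 0 < p ∧ p ≠ 1 ∧
        x = (Filter.limsup (fun n =>
          ∫ ω, ((∑ i ∈ Finset.range n, (A i).indicator (1 : Ω → ℝ) ω) /
              (∑ i ∈ Finset.range n, (μ (A i)).toReal)) ^ p ∂μ) atTop) ^ (1 / (1 - p))} = L := by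
  have hN0 (n : ℕ) (ω : Ω) : 0 ≤ ∑ i ∈ Finset.range n, (A i).indicator (1 : Ω → ℝ) ω :=
    Finset.sum_nonneg fun i _ => indicator_nonneg (fun _ _ => zero_le_one) ω
  have hNn (n : ℕ) (ω : Ω) : ∑ i ∈ Finset.range n, (A i).indicator (1 : Ω → ℝ) ω ≤ n := by
    calc _ ≤ ∑ i ∈ Finset.range n, (1 : ℝ) := Finset.sum_le_sum fun i _ =>
          indicator_apply_le' (f := 1) (fun _ => le_rfl) fun _ => zero_le_one
      _ = n := by simp
  have hS0 (n : ℕ) : 0 ≤ ∑ i ∈ Finset.range n, (μ (A i)).toReal :=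
    Finset.sum_nonneg fun _ _ => ENNReal.toReal_nonneg
  have hmeas (n : ℕ) : Measurable fun ω => ∑ i ∈ Finset.range n, (A i).indicator (1 : Ω → ℝ) ω :=
    Finset.measurable_sum _ fun i _ => measurable_const.indicator (hA i)
  refine sSup_rpow_momentLimsup_eq (fun n => ae_of_all _ fun ω => div_nonneg (hN0 n ω) (hS0 n))
    ?_ (fun n p hp => integrable_rpow_of_le ((hmeas n).div_const _).aemeasurable
      (fun ω => div_nonneg (hN0 n ω) (hS0 n))
      (fun ω => div_le_div_of_nonneg_right (hNn n ω) (hS0 n)) hp.le) hL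
  filter_upwards [hdiv.eventually_gt_atTop 0] with n hn
  rw [integral_div, integral_finsetSum _ fun i _ => (integrable_const 1).indicator (hA i)]
  simp [integral_indicator_one (hA _), measureReal_def, hn.ne']

theorem mori_szekely_sup_eq_limit {Ω : Type*} [MeasurableSpace Ω] (μ : Measure Ω)
    [IsProbabilityMeasure μ] (A : ℕ → Set Ω) (hA : ∀ n, MeasurableSet (A n))
    (hpos : ∀ n, 0 < μ (A n))
    (hdiv : Tendsto (fun n => ∑ k ∈ Finset.range n, (μ (A k)).toReal) atTop atTop)
    (L : ℝ)
    (hL : Tendsto (fun p : ℝ =>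
        Filter.limsup (fun n =>
          ∫ ω, ((∑ i ∈ Finset.range n, (A i).indicator (1 : Ω → ℝ) ω) /
              (∑ i ∈ Finset.range n, (μ (A i)).toReal)) ^ p ∂μ) atTop)
      (nhdsWithin 0 (Set.Ioi 0)) (nhds L)) :
    sSup {x : ℝ | ∃ p : ℝ, 0 < p ∧ p ≠ 1 ∧
        x = (Filter.limsup (fun n =>
          ∫ ω, ((∑ i ∈ Finset.range n, (A i).indicator (1 : Ω → ℝ) ω) /
              (∑ i ∈ Finset.range n, (μ (A i)).toReal)) ^ p ∂μ) atTop) ^ (1 / (1 - p))} = L :=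
  mori_szekely_sup_eq_limit_general μ A hA hdiv L hL
end

section
/- Let P be Lebesgue measure on [0,1] and A_{2^{i−1}+k} = [k/2^i, (k+1)/2^i] ∪ [1/2, 1] for i ≥ 1, 0 ≤ k < 2^{i−1}. Let τ: ℕ → ℕ be any strictly increasing function and p ∈ (0,1). Then E[((∑_{i=1}^n 1_{A_{τ(i)}})/(∑_{i=1}^n P(A_{τ(i)})))^p] ≤ ((log₂ 2n)^p · (1/2)^{1−p} + n^p/2) / (n/2)^p for every n ≥ 1. -/
open MeasureTheory Filter Set

/-- For `n = 2^(i-1) + k` with `i ≥ 1` and `0 ≤ k < 2^(i-1)`, the event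
`A_n = [k/2^i, (k+1)/2^i] ∪ [1/2, 1]`. Here `Nat.log 2 n = i - 1`. -/
noncomputable def dyadicA (n : ℕ) : Set ℝ :=
  Set.Icc (((n : ℝ) - 2 ^ Nat.log 2 n) / 2 ^ (Nat.log 2 n + 1))
      (((n : ℝ) - 2 ^ Nat.log 2 n + 1) / 2 ^ (Nat.log 2 n + 1)) ∪
    Set.Icc (1 / 2 : ℝ) 1

/-! Write `S = ∑_{i ≤ n} 1_{A_{τ(i)}}`. Every `A_m` contains `[1/2, 1]`, so the normaliser
`∑ P(A_{τ(i)})` is at least `n/2`, and on `[1/2, 1]` it suffices that `S ≤ n`. On `[0, 1/2)`,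
Jensen's inequality for the concave `t ↦ t^p` gives `∫ S^p ≤ (1/2)^(1-p) (∫ S)^p`, while
`∫_{[0,1/2)} S = ∑ P(A_{τ(i)} ∩ [0,1/2)) ≤ ∑ 1/τ(i) ≤ H_n ≤ log₂ 2n`: the dyadic piece of
`A_m` has length `2^(-(⌊log₂ m⌋+1)) < 1/m`, and `τ(i) ≥ i`. -/

local notation "P" => volume.restrict (Icc (0 : ℝ) 1)

lemma measureReal_restrict_of_subset {α : Type*} [MeasurableSpace α] {μ : Measure α}
    {s t : Set α} (h : s ⊆ t) : (μ.restrict t).real s = μ.real s := by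
  simp only [measureReal_def, Measure.restrict_eq_self μ h]

instance : IsProbabilityMeasure P := ⟨by simp⟩

theorem integral_rpow_le_mul_rpow_integral {α : Type*} [MeasurableSpace α] {ν : Measure α}
    [IsFiniteMeasure ν] {g : α → ℝ} {p : ℝ} (hp0 : 0 ≤ p) (hp1 : p ≤ 1)
    (hg0 : ∀ᵐ x ∂ν, 0 ≤ g x) (hg : Integrable g ν) (hgp : Integrable (fun x ↦ g x ^ p) ν) :
    ∫ x, g x ^ p ∂ν ≤ ν.real univ ^ (1 - p) * (∫ x, g x ∂ν) ^ p := by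
  rcases eq_zero_or_neZero ν with rfl | hν
  · simp only [integral_zero_measure]
    positivity
  have jensen : ⨍ x, g x ^ p ∂ν ≤ (⨍ x, g x ∂ν) ^ p :=
    (Real.concaveOn_rpow hp0 hp1).le_map_average (Real.continuous_rpow_const hp0).continuousOn
      isClosed_Ici hg0 hg hgp
  have hc : 0 < ν.real univ := by simp
  rw [average_eq, average_eq, smul_eq_mul, smul_eq_mul,
    Real.mul_rpow (by positivity) (integral_nonneg_of_ae hg0), Real.inv_rpow hc.le,
    inv_mul_le_iff₀ hc] at jensen
  calc ∫ x, g x ^ p ∂ν ≤ ν.real univ * ((ν.real univ ^ p)⁻¹ * (∫ x, g x ∂ν) ^ p) := jensen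
    _ = _ := by rw [Real.rpow_sub hc, Real.rpow_one]; ring

lemma sum_Icc_inv_le_harmonic {τ : ℕ → ℕ} (hτ : StrictMono τ) (n : ℕ) :
    ∑ i ∈ Finset.Icc 1 n, ((τ i : ℝ))⁻¹ ≤ harmonic n := by
  rw [harmonic_eq_sum_Icc]
  push_cast
  gcongr with i hi
  · exact_mod_cast (Finset.mem_Icc.1 hi).1
  · exact_mod_cast hτ.id_le i

lemma harmonic_le_logb_two_mul {n : ℕ} (hn : n ≠ 0) :
    (harmonic n : ℝ) ≤ Real.logb 2 (2 * n) := by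
  have hlog2 : 0 < Real.log 2 := Real.log_pos one_lt_two
  calc (harmonic n : ℝ) ≤ 1 + Real.log n := harmonic_le_one_add_log n
    _ ≤ 1 + Real.log n / Real.log 2 := by
      gcongr
      exact le_div_self (Real.log_natCast_nonneg n) hlog2
        (Real.log_two_lt_d9.le.trans (by norm_num))
    _ = Real.logb 2 (2 * n) := by
      rw [Real.logb, Real.log_mul two_ne_zero (by exact_mod_cast hn), add_div,
        div_self hlog2.ne']

lemma measurableSet_dyadicA (m : ℕ) : MeasurableSet (dyadicA m) :=
  measurableSet_Icc.union measurableSet_Icc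

lemma half_le_measureReal_dyadicA (m : ℕ) : 1 / 2 ≤ (P).real (dyadicA m) :=
  calc (1 / 2 : ℝ) = (P).real (Icc (1 / 2) 1) := by
        rw [measureReal_restrict_of_subset (Icc_subset_Icc_left (by norm_num))]
        norm_num
    _ ≤ (P).real (dyadicA m) := measureReal_mono subset_union_right

lemma measureReal_dyadicA_inter_Ico_le {m : ℕ} (hm : m ≠ 0) :
    (P).real (dyadicA m ∩ Ico 0 (1 / 2)) ≤ (m : ℝ)⁻¹ := by
  set L := Nat.log 2 m
  have hsub : dyadicA m ∩ Ico 0 (1 / 2) ⊆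
      Icc (((m : ℝ) - 2 ^ L) / 2 ^ (L + 1)) (((m : ℝ) - 2 ^ L + 1) / 2 ^ (L + 1)) := by
    rintro x ⟨hx | hx, hx'⟩
    · exact hx
    · exact absurd hx'.2 (not_lt.2 hx.1)
  have hm' : (m : ℝ) < 2 ^ (L + 1) := by exact_mod_cast Nat.lt_pow_succ_log_self one_lt_two m
  calc (P).real (dyadicA m ∩ Ico 0 (1 / 2)) = volume.real (dyadicA m ∩ Ico 0 (1 / 2)) :=
        measureReal_restrict_of_subset (inter_subset_right.trans
          (Ico_subset_Icc_self.trans (Icc_subset_Icc_right (by norm_num))))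
    _ ≤ volume.real
          (Icc (((m : ℝ) - 2 ^ L) / 2 ^ (L + 1)) (((m : ℝ) - 2 ^ L + 1) / 2 ^ (L + 1))) :=
        measureReal_mono hsub measure_Icc_lt_top.ne
    _ = (2 ^ (L + 1))⁻¹ := by
        rw [Real.volume_real_Icc_of_le (div_le_div_of_nonneg_right (by linarith) (by positivity))]
        ring
    _ ≤ (m : ℝ)⁻¹ := inv_anti₀ (by positivity) hm'.le

noncomputable def dyadicCount (τ : ℕ → ℕ) (n : ℕ) (x : ℝ) : ℝ :=
  ∑ i ∈ Finset.Icc 1 n, (dyadicA (τ i)).indicator 1 x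

lemma measurable_dyadicCount (τ : ℕ → ℕ) (n : ℕ) : Measurable (dyadicCount τ n) :=
  Finset.measurable_sum _ fun i _ ↦ measurable_const.indicator (measurableSet_dyadicA (τ i))

lemma dyadicCount_nonneg (τ : ℕ → ℕ) (n : ℕ) (x : ℝ) : 0 ≤ dyadicCount τ n x :=
  Finset.sum_nonneg fun _ _ ↦ indicator_nonneg (fun _ _ ↦ zero_le_one) x

lemma dyadicCount_le (τ : ℕ → ℕ) (n : ℕ) (x : ℝ) : dyadicCount τ n x ≤ n := by
  calc dyadicCount τ n x ≤ ∑ _i ∈ Finset.Icc 1 n, (1 : ℝ) :=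
        Finset.sum_le_sum fun i _ ↦ indicator_le_self' (fun _ _ ↦ zero_le_one) x
    _ = n := by simp

lemma norm_rpow_dyadicCount_le (τ : ℕ → ℕ) (n : ℕ) {p : ℝ} (hp : 0 ≤ p) (x : ℝ) :
    ‖dyadicCount τ n x ^ p‖ ≤ (n : ℝ) ^ p := by
  rw [Real.norm_of_nonneg (Real.rpow_nonneg (dyadicCount_nonneg τ n x) p)]
  exact Real.rpow_le_rpow (dyadicCount_nonneg τ n x) (dyadicCount_le τ n x) hp

lemma integrable_dyadicCount (τ : ℕ → ℕ) (n : ℕ) : Integrable (dyadicCount τ n) P :=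
  .of_bound (measurable_dyadicCount τ n).aestronglyMeasurable n (ae_of_all _ fun x ↦ by
    rw [Real.norm_of_nonneg (dyadicCount_nonneg τ n x)]
    exact dyadicCount_le τ n x)

lemma integrable_rpow_dyadicCount (τ : ℕ → ℕ) (n : ℕ) {p : ℝ} (hp : 0 ≤ p) :
    Integrable (fun x ↦ dyadicCount τ n x ^ p) P :=
  .of_bound ((measurable_dyadicCount τ n).pow_const p).aestronglyMeasurable _
    (ae_of_all _ (norm_rpow_dyadicCount_le τ n hp))

lemma setIntegral_dyadicCount_Ico_le {τ : ℕ → ℕ} (hτ : StrictMono τ) {n : ℕ} (hn : n ≠ 0) :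
    ∫ x in Ico 0 (1 / 2), dyadicCount τ n x ∂P ≤ Real.logb 2 (2 * n) := by
  have hτ0 : ∀ i ∈ Finset.Icc 1 n, τ i ≠ 0 := fun i hi ↦
    Nat.one_le_iff_ne_zero.1 ((Finset.mem_Icc.1 hi).1.trans (hτ.id_le i))
  calc ∫ x in Ico 0 (1 / 2), dyadicCount τ n x ∂P
        = ∑ i ∈ Finset.Icc 1 n, (P).real (dyadicA (τ i) ∩ Ico 0 (1 / 2)) := by
        simp only [dyadicCount]
        rw [integral_finsetSum _ fun i _ ↦
          (integrable_const 1).indicator (measurableSet_dyadicA (τ i))]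
        simp_rw [integral_indicator_one (measurableSet_dyadicA _),
          measureReal_restrict_apply (measurableSet_dyadicA _)]
    _ ≤ ∑ i ∈ Finset.Icc 1 n, ((τ i : ℝ))⁻¹ :=
        Finset.sum_le_sum fun i hi ↦ measureReal_dyadicA_inter_Ico_le (hτ0 i hi)
    _ ≤ harmonic n := sum_Icc_inv_le_harmonic hτ n
    _ ≤ Real.logb 2 (2 * n) := harmonic_le_logb_two_mul hn

lemma integral_rpow_dyadicCount_le {τ : ℕ → ℕ} (hτ : StrictMono τ) {p : ℝ} (hp : p ∈ Ioo 0 1)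
    {n : ℕ} (hn : n ≠ 0) :
    ∫ x, dyadicCount τ n x ^ p ∂P ≤
      Real.logb 2 (2 * n) ^ p * (1 / 2) ^ (1 - p) + (n : ℝ) ^ p / 2 := by
  set u : Set ℝ := Ico 0 (1 / 2)
  have hu : MeasurableSet u := measurableSet_Ico
  have hPu : (P).real u = 1 / 2 := by
    rw [measureReal_restrict_of_subset
      (Ico_subset_Icc_self.trans (Icc_subset_Icc_right (by norm_num)))]
    norm_num
  have hint := integrable_rpow_dyadicCount τ n hp.1.le
  have left :
      ∫ x in u, dyadicCount τ n x ^ p ∂P ≤ (1 / 2) ^ (1 - p) * Real.logb 2 (2 * n) ^ p :=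
    calc ∫ x in u, dyadicCount τ n x ^ p ∂P
        ≤ ((P).restrict u).real univ ^ (1 - p) * (∫ x in u, dyadicCount τ n x ∂P) ^ p :=
          integral_rpow_le_mul_rpow_integral hp.1.le hp.2.le
            (ae_of_all _ (dyadicCount_nonneg τ n))
            (integrable_dyadicCount τ n).integrableOn hint.integrableOn
      _ ≤ (1 / 2) ^ (1 - p) * Real.logb 2 (2 * n) ^ p := by
          rw [measureReal_restrict_apply_univ, hPu]
          have hS0 : 0 ≤ ∫ x in u, dyadicCount τ n x ∂P :=
            setIntegral_nonneg hu fun x _ ↦ dyadicCount_nonneg τ n x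
          exact mul_le_mul_of_nonneg_left
            (Real.rpow_le_rpow hS0 (setIntegral_dyadicCount_Ico_le hτ hn) hp.1.le) (by positivity)
  have right : ∫ x in uᶜ, dyadicCount τ n x ^ p ∂P ≤ (n : ℝ) ^ p / 2 :=
    calc ∫ x in uᶜ, dyadicCount τ n x ^ p ∂P
        ≤ (n : ℝ) ^ p * (P).real uᶜ :=
          (Real.le_norm_self _).trans (norm_setIntegral_le_of_norm_le_const (measure_lt_top _ _)
            fun x _ ↦ norm_rpow_dyadicCount_le τ n hp.1.le x)
      _ = (n : ℝ) ^ p / 2 := by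
          rw [measureReal_compl hu, probReal_univ, hPu]
          ring
  rw [← integral_add_compl hu hint]
  linarith

lemma half_le_sum_measureReal_dyadicA (τ : ℕ → ℕ) (n : ℕ) :
    (n : ℝ) / 2 ≤ ∑ i ∈ Finset.Icc 1 n, (P).real (dyadicA (τ i)) :=
  calc (n : ℝ) / 2 = ∑ _i ∈ Finset.Icc 1 n, (1 / 2 : ℝ) := by simp [div_eq_mul_inv]
    _ ≤ _ := Finset.sum_le_sum fun i _ ↦ half_le_measureReal_dyadicA (τ i)

theorem dyadic_subsequence_moment_bound_general (τ : ℕ → ℕ) (hτ : StrictMono τ)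
    (p : ℝ) (hp : p ∈ Set.Ioo (0 : ℝ) 1) (n : ℕ) (hn : 1 ≤ n) :
    ∫ x, ((∑ i ∈ Finset.Icc 1 n, (dyadicA (τ i)).indicator (1 : ℝ → ℝ) x) /
          (∑ i ∈ Finset.Icc 1 n,
            ((volume.restrict (Set.Icc (0 : ℝ) 1)) (dyadicA (τ i))).toReal)) ^ p
        ∂(volume.restrict (Set.Icc (0 : ℝ) 1)) ≤
      ((Real.logb 2 (2 * n)) ^ p * (1 / 2 : ℝ) ^ (1 - p) + (n : ℝ) ^ p / 2) /
        ((n / 2 : ℝ) ^ p) := by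
  set D := ∑ i ∈ Finset.Icc 1 n, (P).real (dyadicA (τ i))
  have hD : (n : ℝ) / 2 ≤ D := half_le_sum_measureReal_dyadicA τ n
  have hD0 : 0 ≤ D := (by positivity : (0 : ℝ) ≤ n / 2).trans hD
  calc ∫ x, (dyadicCount τ n x / D) ^ p ∂P = (∫ x, dyadicCount τ n x ^ p ∂P) / D ^ p := by
        simp_rw [Real.div_rpow (dyadicCount_nonneg τ n _) hD0]
        exact integral_div _ _
    _ ≤ (∫ x, dyadicCount τ n x ^ p ∂P) / (n / 2) ^ p := by
        gcongr
        · exact integral_nonneg fun x ↦ Real.rpow_nonneg (dyadicCount_nonneg τ n x) p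
        · exact hp.1.le
    _ ≤ _ := by
        gcongr
        exact integral_rpow_dyadicCount_le hτ hp (by omega)

theorem dyadic_subsequence_moment_bound (τ : ℕ → ℕ) (hτ : StrictMono τ)
    (hτ1 : ∀ n, 1 ≤ τ n) (p : ℝ) (hp : p ∈ Set.Ioo (0 : ℝ) 1) (n : ℕ) (hn : 1 ≤ n) :
    ∫ x, ((∑ i ∈ Finset.Icc 1 n, (dyadicA (τ i)).indicator (1 : ℝ → ℝ) x) /
          (∑ i ∈ Finset.Icc 1 n,
            ((volume.restrict (Set.Icc (0 : ℝ) 1)) (dyadicA (τ i))).toReal)) ^ p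
        ∂(volume.restrict (Set.Icc (0 : ℝ) 1)) ≤
      ((Real.logb 2 (2 * n)) ^ p * (1 / 2 : ℝ) ^ (1 - p) + (n : ℝ) ^ p / 2) /
        ((n / 2 : ℝ) ^ p) :=
  dyadic_subsequence_moment_bound_general τ hτ p hp n hn
end

section
/- Let {A_i}_{i=1}^m be events with P(A_i) > 0 in a probability space. Then P(⋃_{i=1}^m A_i) ≥ sup over (ω_1,…,ω_m) ∈ ℝ^m of (∑_{i=1}^m ω_i P(A_i))² / (∑_{i=1}^m ∑_{j=1}^m ω_i ω_j P(A_i ∩ A_j)), with the convention 0/0 = 0. -/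
/-!
With `X = ∑ i, ω i • 1_{A i}`, the numerator is `(𝔼 X)²` and the denominator is `𝔼 X²`.
Since `X` vanishes off `U = ⋃ i, A i`, the Cauchy–Schwarz inequality for `X` and `1_U` gives
`(𝔼 X)² ≤ P(U) 𝔼 X²`.
-/

open MeasureTheory Set

namespace MeasureTheory

variable {Ω : Type*} [MeasurableSpace Ω] {μ : Measure Ω} [IsFiniteMeasure μ]

theorem sq_integral_le_measureReal_mul_integral_sq {U : Set Ω} (hU : MeasurableSet U)
    {X : Ω → ℝ} (hX : MemLp X 2 μ) (hXU : ∀ x ∉ U, X x = 0) :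
    (∫ x, X x ∂μ) ^ 2 ≤ μ.real U * ∫ x, X x ^ 2 ∂μ := by
  have hXint : Integrable X μ := hX.integrable one_le_two
  have hUint : Integrable (U.indicator (1 : Ω → ℝ)) μ := (integrable_const 1).indicator hU
  -- `t ↦ ∫ (X - t 1_U)²` is a nonnegative quadratic, so its discriminant is `≤ 0`.
  have hquad : ∀ t : ℝ,
      0 ≤ μ.real U * (t * t) + (-2 * ∫ x, X x ∂μ) * t + ∫ x, X x ^ 2 ∂μ := by
    intro t
    have hexpand : ∀ x, (X x - t * U.indicator 1 x) ^ 2 =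
        X x ^ 2 - 2 * t * X x + t ^ 2 * U.indicator 1 x := by
      intro x
      by_cases hx : x ∈ U
      · simp only [indicator_of_mem hx, Pi.one_apply]; ring
      · simp only [indicator_of_notMem hx, hXU x hx]; ring
    have hnonneg : 0 ≤ ∫ x, (X x - t * U.indicator 1 x) ^ 2 ∂μ :=
      integral_nonneg fun x => sq_nonneg _
    have hlin : Integrable (fun x => X x ^ 2 - 2 * t * X x) μ :=
      hX.integrable_sq.sub (hXint.const_mul (2 * t))
    simp only [hexpand] at hnonneg
    rw [integral_add hlin (hUint.const_mul (t ^ 2)),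
      integral_sub hX.integrable_sq (hXint.const_mul (2 * t)), integral_const_mul,
      integral_const_mul, integral_indicator_one hU] at hnonneg
    linarith
  have hdiscrim := discrim_le_zero hquad
  rw [discrim] at hdiscrim
  linarith

variable {ι : Type*} [Fintype ι] {A : ι → Set Ω}

theorem integral_sum_indicator_const (hA : ∀ i, MeasurableSet (A i)) (c : ι → ℝ) :
    ∫ x, ∑ i, (A i).indicator (fun _ => c i) x ∂μ = ∑ i, c i * μ.real (A i) := by
  rw [integral_finsetSum _ fun i _ => (integrable_const (c i)).indicator (hA i)]
  simp only [integral_indicator_const _ (hA _), smul_eq_mul, mul_comm]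

theorem integral_sq_sum_indicator_const (hA : ∀ i, MeasurableSet (A i)) (c : ι → ℝ) :
    ∫ x, (∑ i, (A i).indicator (fun _ => c i) x) ^ 2 ∂μ =
      ∑ i, ∑ j, c i * c j * μ.real (A i ∩ A j) := by
  have hsq : ∀ x, (∑ i, (A i).indicator (fun _ => c i) x) ^ 2 =
      ∑ p : ι × ι, (A p.1 ∩ A p.2).indicator (fun _ => c p.1 * c p.2) x := by
    intro x
    rw [sq, Finset.sum_mul_sum, ← Fintype.sum_prod_type']
    simp only [inter_indicator_mul]
  simp only [hsq]
  rw [integral_sum_indicator_const (A := fun p : ι × ι => A p.1 ∩ A p.2)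
    (fun p => (hA p.1).inter (hA p.2)) (fun p => c p.1 * c p.2)]
  exact Fintype.sum_prod_type' fun i j => c i * c j * μ.real (A i ∩ A j)

theorem sum_mul_mul_measureReal_inter_nonneg (hA : ∀ i, MeasurableSet (A i)) (c : ι → ℝ) :
    0 ≤ ∑ i, ∑ j, c i * c j * μ.real (A i ∩ A j) := by
  rw [← integral_sq_sum_indicator_const hA]
  exact integral_nonneg fun _ => sq_nonneg _

end MeasureTheory

theorem gallot_kounias_bound_general {Ω : Type*} [MeasurableSpace Ω] (μ : Measure Ω)
    [IsProbabilityMeasure μ] (m : ℕ) (A : Fin m → Set Ω)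
    (hA : ∀ i, MeasurableSet (A i)) :
    (μ (⋃ i, A i)).toReal ≥
      sSup {x : ℝ | ∃ ω : Fin m → ℝ,
        x = (∑ i, ω i * (μ (A i)).toReal) ^ 2 /
          (∑ i, ∑ j, ω i * ω j * (μ (A i ∩ A j)).toReal)} := by
  refine Real.sSup_le ?_ ENNReal.toReal_nonneg
  rintro _ ⟨ω, rfl⟩
  have hX : MemLp (fun x => ∑ i, (A i).indicator (fun _ => ω i) x) 2 μ :=
    memLp_finsetSum Finset.univ fun i _ =>
      memLp_indicator_const 2 (hA i) (ω i) (Or.inr (measure_ne_top μ _))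
  have hcs := sq_integral_le_measureReal_mul_integral_sq (MeasurableSet.iUnion hA) hX
    fun x hx => Finset.sum_eq_zero fun i _ =>
      indicator_of_notMem (fun h => hx (mem_iUnion_of_mem i h)) _
  rw [integral_sum_indicator_const hA, integral_sq_sum_indicator_const hA] at hcs
  exact div_le_of_le_mul₀ (sum_mul_mul_measureReal_inter_nonneg hA ω) ENNReal.toReal_nonneg hcs

theorem gallot_kounias_bound {Ω : Type*} [MeasurableSpace Ω] (μ : Measure Ω)
    [IsProbabilityMeasure μ] (m : ℕ) (A : Fin m → Set Ω)
    (hA : ∀ i, MeasurableSet (A i)) (hpos : ∀ i, 0 < μ (A i)) :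
    (μ (⋃ i, A i)).toReal ≥
      sSup {x : ℝ | ∃ ω : Fin m → ℝ,
        x = (∑ i, ω i * (μ (A i)).toReal) ^ 2 /
          (∑ i, ∑ j, ω i * ω j * (μ (A i ∩ A j)).toReal)} :=
  gallot_kounias_bound_general μ m A hA
end

section
/- Let {A_i}_{i=1}^m be events with P(A_i) > 0 and suppose (γ_1,…,γ_m) ∈ ℝ^m satisfies ∑_{j=1}^m (P(A_i ∩ A_j)/(P(A_i)P(A_j))) γ_j = 1 for every i. Then sup over (ω_1,…,ω_m) ∈ ℝ^m of (∑_i ω_i P(A_i))² / (∑_{i,j} ω_i ω_j P(A_i ∩ A_j)) equals ∑_{i=1}^m γ_i. -/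
/-!
In `L²(μ)` the indicators `vᵢ = 1_{Aᵢ}` satisfy `⟪vᵢ, vⱼ⟫ = P(Aᵢ ∩ Aⱼ)`, so the denominator is
`‖u‖²` for `u = ∑ ωᵢ vᵢ`. With `w = ∑ (γⱼ / P(Aⱼ)) vⱼ` the linear system says `⟪vᵢ, w⟫ = P(Aᵢ)`,
so the numerator is `⟪u, w⟫²`. By Cauchy–Schwarz the ratio is at most `‖w‖² = ∑ γᵢ`, with
equality at `u = w`.
-/

open MeasureTheory Filter Set

open Finset RealInnerProductSpace

section Gram

variable {F : Type*} [NormedAddCommGroup F] [InnerProductSpace ℝ F]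

theorem isGreatest_inner_sq_div_inner_self {α : Type*} (f : α → F) (a₀ : α) :
    IsGreatest {y : ℝ | ∃ a, y = ⟪f a, f a₀⟫ ^ 2 / ⟪f a, f a⟫} ⟪f a₀, f a₀⟫ := by
  refine ⟨⟨a₀, ?_⟩, ?_⟩
  · rcases eq_or_ne ⟪f a₀, f a₀⟫ 0 with h | h
    · rw [h, div_zero]
    · rw [sq, mul_div_assoc, div_self h, mul_one]
  · rintro y ⟨a, rfl⟩
    rcases (real_inner_self_nonneg (x := f a)).eq_or_lt with h | h
    · rw [← h, div_zero]
      exact real_inner_self_nonneg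
    · rw [div_le_iff₀ h, sq, mul_comm ⟪f a₀, f a₀⟫]
      exact real_inner_mul_inner_self_le _ _

variable {ι : Type*} [Fintype ι]

theorem inner_sum_smul_sum_smul (v : ι → F) (ω η : ι → ℝ) :
    ⟪∑ i, ω i • v i, ∑ j, η j • v j⟫ = ∑ i, ∑ j, ω i * η j * ⟪v i, v j⟫ := by
  rw [sum_inner]
  refine sum_congr rfl fun i _ => ?_
  rw [real_inner_smul_left, inner_sum, mul_sum]
  exact sum_congr rfl fun j _ => by rw [real_inner_smul_right]; ring

theorem isGreatest_sq_div_gram_form_of_gram_solution (v : ι → F) (p x : ι → ℝ)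
    (hx : ∀ i, ∑ j, ⟪v i, v j⟫ * x j = p i) :
    IsGreatest {y : ℝ | ∃ ω : ι → ℝ,
        y = (∑ i, ω i * p i) ^ 2 / ∑ i, ∑ j, ω i * ω j * ⟪v i, v j⟫} (∑ i, x i * p i) := by
  have hp : ∀ ω : ι → ℝ, ∑ i, ω i * p i = ⟪∑ i, ω i • v i, ∑ j, x j • v j⟫ := by
    intro ω
    rw [inner_sum_smul_sum_smul]
    refine sum_congr rfl fun i _ => ?_
    rw [← hx i, mul_sum]
    exact sum_congr rfl fun j _ => by ring
  simpa only [← hp, inner_sum_smul_sum_smul] using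
    isGreatest_inner_sq_div_inner_self (fun ω : ι → ℝ => ∑ i, ω i • v i) x

end Gram

theorem gallot_kounias_value {Ω : Type*} [MeasurableSpace Ω] (μ : Measure Ω)
    [IsProbabilityMeasure μ] (m : ℕ) (A : Fin m → Set Ω)
    (hA : ∀ i, MeasurableSet (A i)) (hpos : ∀ i, 0 < μ (A i))
    (γ : Fin m → ℝ)
    (hγ : ∀ i, ∑ j, (μ (A i ∩ A j)).toReal /
        ((μ (A i)).toReal * (μ (A j)).toReal) * γ j = 1) :
    sSup {x : ℝ | ∃ ω : Fin m → ℝ,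
        x = (∑ i, ω i * (μ (A i)).toReal) ^ 2 /
          (∑ i, ∑ j, ω i * ω j * (μ (A i ∩ A j)).toReal)} = ∑ i, γ i := by
  let v i : Lp ℝ 2 μ := indicatorConstLp 2 (hA i) (measure_ne_top μ _) 1
  have hv : ∀ i j, ⟪v i, v j⟫ = (μ (A i ∩ A j)).toReal := fun i j =>
    L2.inner_indicatorConstLp_one_indicatorConstLp_one _ _ _ _
  have hp : ∀ i, (μ (A i)).toReal ≠ 0 := fun i =>
    (ENNReal.toReal_pos (hpos i).ne' (measure_ne_top μ _)).ne'
  have hx : ∀ i, ∑ j, ⟪v i, v j⟫ * (γ j / (μ (A j)).toReal) = (μ (A i)).toReal := by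
    intro i
    rw [← div_eq_one_iff_eq (hp i), ← hγ i, sum_div]
    refine sum_congr rfl fun j _ => ?_
    rw [hv]
    field_simp [hp i, hp j]
  have hsum : ∑ i, γ i / (μ (A i)).toReal * (μ (A i)).toReal = ∑ i, γ i :=
    sum_congr rfl fun i _ => div_mul_cancel₀ _ (hp i)
  have := isGreatest_sq_div_gram_form_of_gram_solution v _ _ hx
  simp only [hv, hsum] at this
  exact this.csSup_eq
end

section
/- Let {A_i}_{i=1}^m be events with P(A_i) > 0, let S_i = ∑_{j=1}^m P(A_i ∩ A_j), and let θ_i be the fractional part of S_i/P(A_i). Then P(⋃_{i=1}^m A_i) ≥ ∑_{i=1}^m ( θ_i P(A_i)² / (S_i + (1−θ_i)P(A_i)) + (1−θ_i) P(A_i)² / (S_i − θ_i P(A_i)) ). -/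
open MeasureTheory Filter Set

/-!
Let `g ω` be the number of events containing `ω`. Then `P(⋃ Aᵢ) = ∑ᵢ ∫_{Aᵢ} 1/g` and
`∫_{Aᵢ} g = Sᵢ`. On the positive integers `1/n` lies above the chord of `x ↦ 1/x` through
`k` and `k + 1`, i.e. `1/n ≥ (2k + 1 - n) / (k (k + 1))`, because `(n - k)(n - k - 1) ≥ 0`.
Integrating this over `Aᵢ` with `k = ⌊Sᵢ / P(Aᵢ)⌋` gives exactly the `i`-th term of the bound.
-/

theorem sub_div_le_inv_natCast {k : ℤ} {n : ℕ} (hk : 0 < k) (hn : 0 < n) :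
    (2 * k + 1 - n) / (k * (k + 1)) ≤ (n : ℝ)⁻¹ := by
  have hchord : (0 : ℝ) ≤ (n - k) * (n - k - 1) := by
    exact_mod_cast (mul_nonneg_iff.mpr (by omega) : (0 : ℤ) ≤ (n - k) * (n - k - 1))
  have hk' : (0 : ℝ) < k := by exact_mod_cast hk
  rw [div_le_iff₀ (by positivity), inv_mul_eq_div, le_div_iff₀ (by exact_mod_cast hn)]
  nlinarith

section CoverCount

variable {ι Ω : Type*} [Fintype ι]

open Classical in
noncomputable def coverCount (A : ι → Set Ω) (ω : Ω) : ℕ :=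
  (Finset.univ.filter fun i => ω ∈ A i).card

theorem coverCount_eq_sum_indicator (A : ι → Set Ω) (ω : Ω) :
    (coverCount A ω : ℝ) = ∑ i, (A i).indicator 1 ω := by
  classical
  simp only [coverCount, Finset.natCast_card_filter, Set.indicator_apply, Pi.one_apply]

theorem coverCount_pos_iff {A : ι → Set Ω} {ω : Ω} : 0 < coverCount A ω ↔ ω ∈ ⋃ i, A i := by
  classical
  simp [coverCount, Finset.card_pos, Finset.filter_nonempty_iff]

theorem sum_indicator_inv_coverCount (A : ι → Set Ω) (ω : Ω) :
    ∑ i, (A i).indicator (fun ω => (coverCount A ω : ℝ)⁻¹) ω = (⋃ i, A i).indicator 1 ω := by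
  have hmul : ∀ i, (A i).indicator (fun ω => (coverCount A ω : ℝ)⁻¹) ω
      = (A i).indicator 1 ω * (coverCount A ω : ℝ)⁻¹ := fun i => by
    simpa using Set.indicator_mul_left (A i) 1 fun ω => (coverCount A ω : ℝ)⁻¹
  rw [Finset.sum_congr rfl fun i _ => hmul i, ← Finset.sum_mul, ← coverCount_eq_sum_indicator]
  by_cases h : ω ∈ ⋃ i, A i
  · rw [Set.indicator_of_mem h, Pi.one_apply, mul_inv_cancel₀]
    exact_mod_cast (coverCount_pos_iff.mpr h).ne'
  · rw [Set.indicator_of_notMem h, Nat.eq_zero_of_not_pos (mt coverCount_pos_iff.mp h)]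
    simp

variable [MeasurableSpace Ω] {A : ι → Set Ω}

theorem measurable_coverCount (hA : ∀ i, MeasurableSet (A i)) :
    Measurable fun ω => (coverCount A ω : ℝ) := by
  simp only [coverCount_eq_sum_indicator]
  exact Finset.measurable_sum _ fun i _ => measurable_const.indicator (hA i)

variable (μ : Measure Ω) [IsFiniteMeasure μ]

theorem integrable_coverCount (hA : ∀ i, MeasurableSet (A i)) :
    Integrable (fun ω => (coverCount A ω : ℝ)) μ := by
  classical
  refine .of_bound (measurable_coverCount hA).aestronglyMeasurable (Fintype.card ι)
    (ae_of_all _ fun ω => ?_)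
  rw [Real.norm_natCast]
  exact_mod_cast Finset.card_filter_le _ _

theorem integrable_inv_coverCount (hA : ∀ i, MeasurableSet (A i)) :
    Integrable (fun ω => (coverCount A ω : ℝ)⁻¹) μ := by
  refine .of_bound (measurable_coverCount hA).inv.aestronglyMeasurable 1 (ae_of_all _ fun ω => ?_)
  rw [Real.norm_of_nonneg (by positivity)]
  exact inv_le_one_iff₀.mpr <| (coverCount A ω).eq_zero_or_pos.imp (by simp [·]) Nat.one_le_cast.mpr

theorem measureReal_iUnion_eq_sum_setIntegral_inv_coverCount (hA : ∀ i, MeasurableSet (A i)) :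
    μ.real (⋃ i, A i) = ∑ i, ∫ ω in A i, (coverCount A ω : ℝ)⁻¹ ∂μ := by
  simp only [← integral_indicator (hA _)]
  rw [← integral_finsetSum _ fun i _ => (integrable_inv_coverCount μ hA).indicator (hA i)]
  simp only [sum_indicator_inv_coverCount]
  exact (integral_indicator_one (MeasurableSet.iUnion hA)).symm

theorem setIntegral_coverCount (hA : ∀ i, MeasurableSet (A i)) (i : ι) :
    ∫ ω in A i, (coverCount A ω : ℝ) ∂μ = ∑ j, μ.real (A i ∩ A j) := by
  simp only [coverCount_eq_sum_indicator]
  rw [integral_finsetSum _ fun j _ => ((integrable_const 1).indicator (hA j)).restrict]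
  refine Finset.sum_congr rfl fun j _ => ?_
  rw [setIntegral_indicator (hA j)]
  simp

theorem div_le_setIntegral_inv_coverCount (hA : ∀ i, MeasurableSet (A i)) (i : ι) {k : ℤ}
    (hk : 0 < k) :
    ((2 * k + 1) * μ.real (A i) - ∑ j, μ.real (A i ∩ A j)) / (k * (k + 1))
      ≤ ∫ ω in A i, (coverCount A ω : ℝ)⁻¹ ∂μ := by
  calc ((2 * k + 1) * μ.real (A i) - ∑ j, μ.real (A i ∩ A j)) / (k * (k + 1))
      = ∫ ω in A i, (2 * k + 1 - (coverCount A ω : ℝ)) / (k * (k + 1)) ∂μ := by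
        rw [integral_div, integral_sub (integrable_const _) (integrable_coverCount μ hA).restrict,
          setIntegral_const, setIntegral_coverCount μ hA, smul_eq_mul, mul_comm]
    _ ≤ ∫ ω in A i, (coverCount A ω : ℝ)⁻¹ ∂μ := by
        refine setIntegral_mono_on ?_ ?_ (hA i) fun ω hω => ?_
        · exact (((integrable_const _).sub (integrable_coverCount μ hA)).div_const _).integrableOn
        · exact (integrable_inv_coverCount μ hA).integrableOn
        · exact sub_div_le_inv_natCast hk (coverCount_pos_iff.mpr (mem_iUnion_of_mem i hω))

end CoverCount

theorem mul_sq_div_add_mul_sq_div_eq {P S k θ : ℝ} (hP : P ≠ 0) (hk : 0 < k)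
    (hS : S = P * (k + θ)) :
    θ * P ^ 2 / (S + (1 - θ) * P) + (1 - θ) * P ^ 2 / (S - θ * P)
      = ((2 * k + 1) * P - S) / (k * (k + 1)) := by
  have hS₁ : S + (1 - θ) * P = P * (k + 1) := by rw [hS]; ring
  have hS₀ : S - θ * P = P * k := by rw [hS]; ring
  rw [hS₁, hS₀, hS]
  field_simp
  ring

theorem kuai_alajaji_takahara_bound {Ω : Type*} [MeasurableSpace Ω] (μ : Measure Ω)
    [IsProbabilityMeasure μ] (m : ℕ) (A : Fin m → Set Ω)
    (hA : ∀ i, MeasurableSet (A i)) (hpos : ∀ i, 0 < μ (A i))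
    (S : Fin m → ℝ) (hS : ∀ i, S i = ∑ j, (μ (A i ∩ A j)).toReal)
    (θ : Fin m → ℝ) (hθ : ∀ i, θ i = Int.fract (S i / (μ (A i)).toReal)) :
    (μ (⋃ i, A i)).toReal ≥
      ∑ i, (θ i * (μ (A i)).toReal ^ 2 / (S i + (1 - θ i) * (μ (A i)).toReal) +
        (1 - θ i) * (μ (A i)).toReal ^ 2 / (S i - θ i * (μ (A i)).toReal)) := by
  simp only [← measureReal_def] at hS hθ ⊢
  rw [ge_iff_le, measureReal_iUnion_eq_sum_setIntegral_inv_coverCount μ hA]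
  refine Finset.sum_le_sum fun i _ => ?_
  have hP : 0 < μ.real (A i) := ENNReal.toReal_pos (hpos i).ne' (measure_ne_top μ _)
  have hPS : μ.real (A i) ≤ S i := by
    simpa [hS i] using Finset.single_le_sum (f := fun j => μ.real (A i ∩ A j))
      (fun j _ => measureReal_nonneg) (Finset.mem_univ i)
  have hk : 0 < ⌊S i / μ.real (A i)⌋ := Int.floor_pos.mpr ((one_le_div hP).mpr hPS)
  have hSk : S i = μ.real (A i) * (⌊S i / μ.real (A i)⌋ + θ i) := by
    rw [hθ i, Int.floor_add_fract, mul_div_cancel₀ _ hP.ne']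
  rw [mul_sq_div_add_mul_sq_div_eq hP.ne' (by exact_mod_cast hk) hSk]
  simpa only [← hS i] using div_le_setIntegral_inv_coverCount μ hA i hk
end

section
/- For events {A_i}_{i=1}^m with P(A_i) > 0, letting S_i = ∑_j P(A_i ∩ A_j) and θ_i = frac(S_i/P(A_i)), one has KAT({A_i}) := ∑_i (θ_i P(A_i)²/(S_i + (1−θ_i)P(A_i)) + (1−θ_i)P(A_i)²/(S_i − θ_i P(A_i))) ≥ (∑_i P(A_i))² / ∑_{i,j} P(A_i ∩ A_j). -/
/-!
By the Cauchy–Schwarz inequality in Sedrakyan's form, `(∑ P(Aᵢ))² / ∑ Sᵢ ≤ ∑ P(Aᵢ)² / Sᵢ`.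
Each `P(Aᵢ)² / Sᵢ` is in turn at most the `i`-th KAT summand by convexity of `x ↦ 1 / x`,
since `Sᵢ` is the convex combination with weights `θᵢ, 1 - θᵢ` of
`Sᵢ + (1 - θᵢ) P(Aᵢ)` and `Sᵢ - θᵢ P(Aᵢ)`.
-/

open MeasureTheory

lemma sq_div_le_convex_split_sq_div {p s θ : ℝ} (hθ₀ : 0 ≤ θ) (hθ₁ : θ ≤ 1)
    (hhi : 0 < s + (1 - θ) * p) (hlo : 0 < s - θ * p) :
    p ^ 2 / s ≤ θ * p ^ 2 / (s + (1 - θ) * p) + (1 - θ) * p ^ 2 / (s - θ * p) := by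
  have hsplit : θ • (s + (1 - θ) * p) + (1 - θ) • (s - θ * p) = s := by
    simp only [smul_eq_mul]; ring
  have hinv : s⁻¹ ≤ θ • (s + (1 - θ) * p)⁻¹ + (1 - θ) • (s - θ * p)⁻¹ := by
    simpa only [hsplit, zpow_neg_one] using
      (convexOn_zpow (-1)).2 hhi hlo hθ₀ (sub_nonneg.2 hθ₁) (add_sub_cancel θ 1)
  calc p ^ 2 / s = p ^ 2 * s⁻¹ := div_eq_mul_inv _ _
    _ ≤ p ^ 2 * (θ • (s + (1 - θ) * p)⁻¹ + (1 - θ) • (s - θ * p)⁻¹) :=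
        mul_le_mul_of_nonneg_left hinv (sq_nonneg p)
    _ = _ := by simp only [smul_eq_mul]; ring

lemma toReal_measure_le_sum_inter {Ω ι : Type*} [MeasurableSpace Ω] [Fintype ι]
    (μ : Measure Ω) (A : ι → Set Ω) (i : ι) :
    (μ (A i)).toReal ≤ ∑ j, (μ (A i ∩ A j)).toReal := by
  simpa only [Set.inter_self] using Finset.single_le_sum (f := fun j => (μ (A i ∩ A j)).toReal)
    (fun _ _ => ENNReal.toReal_nonneg) (Finset.mem_univ i)

theorem KAT_ge_chung_erdos_general {Ω : Type*} [MeasurableSpace Ω] (μ : Measure Ω)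
    [IsProbabilityMeasure μ] (m : ℕ) (A : Fin m → Set Ω)
    (hpos : ∀ i, 0 < μ (A i))
    (S : Fin m → ℝ) (hS : ∀ i, S i = ∑ j, (μ (A i ∩ A j)).toReal)
    (θ : Fin m → ℝ) (hθ : ∀ i, θ i = Int.fract (S i / (μ (A i)).toReal)) :
    ∑ i, (θ i * (μ (A i)).toReal ^ 2 / (S i + (1 - θ i) * (μ (A i)).toReal) +
        (1 - θ i) * (μ (A i)).toReal ^ 2 / (S i - θ i * (μ (A i)).toReal)) ≥
      (∑ i, (μ (A i)).toReal) ^ 2 / (∑ i, ∑ j, (μ (A i ∩ A j)).toReal) := by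
  set P : Fin m → ℝ := fun i => (μ (A i)).toReal
  have hPpos (i : Fin m) : 0 < P i := ENNReal.toReal_pos (hpos i).ne' (measure_ne_top μ _)
  have hPS (i : Fin m) : P i ≤ S i := hS i ▸ toReal_measure_le_sum_inter μ A i
  have hθ₀ (i : Fin m) : 0 ≤ θ i := hθ i ▸ Int.fract_nonneg _
  have hθ₁ (i : Fin m) : θ i < 1 := hθ i ▸ Int.fract_lt_one _
  have hterm (i : Fin m) : P i ^ 2 / S i ≤
      θ i * P i ^ 2 / (S i + (1 - θ i) * P i) + (1 - θ i) * P i ^ 2 / (S i - θ i * P i) :=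
    sq_div_le_convex_split_sq_div (hθ₀ i) (hθ₁ i).le
      (by nlinarith [hPpos i, hPS i, hθ₁ i]) (by nlinarith [hPpos i, hPS i, hθ₁ i])
  calc (∑ i, P i) ^ 2 / (∑ i, ∑ j, (μ (A i ∩ A j)).toReal)
      = (∑ i, P i) ^ 2 / ∑ i, S i := by simp only [hS]
    _ ≤ ∑ i, P i ^ 2 / S i :=
        Finset.sq_sum_div_le_sum_sq_div _ P fun i _ => (hPpos i).trans_le (hPS i)
    _ ≤ _ := Finset.sum_le_sum fun i _ => hterm i

theorem KAT_ge_chung_erdos {Ω : Type*} [MeasurableSpace Ω] (μ : Measure Ω)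
    [IsProbabilityMeasure μ] (m : ℕ) (A : Fin m → Set Ω)
    (hA : ∀ i, MeasurableSet (A i)) (hpos : ∀ i, 0 < μ (A i))
    (S : Fin m → ℝ) (hS : ∀ i, S i = ∑ j, (μ (A i ∩ A j)).toReal)
    (θ : Fin m → ℝ) (hθ : ∀ i, θ i = Int.fract (S i / (μ (A i)).toReal)) :
    ∑ i, (θ i * (μ (A i)).toReal ^ 2 / (S i + (1 - θ i) * (μ (A i)).toReal) +
        (1 - θ i) * (μ (A i)).toReal ^ 2 / (S i - θ i * (μ (A i)).toReal)) ≥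
      (∑ i, (μ (A i)).toReal) ^ 2 / (∑ i, ∑ j, (μ (A i ∩ A j)).toReal) :=
  KAT_ge_chung_erdos_general μ m A hpos S hS θ hθ
end

section
/- Let {A_i}_{i=1}^m be events with P(A_i) > 0, extended periodically to {B_n} by B_n = A_{((n−1) mod m)+1}. Then for every strictly increasing τ: ℕ → ℕ with ∑_n P(B_{τ(n)}) = ∞, limsup_{N→∞} (∑_{k=1}^N P(B_{τ(k)}))² / (∑_{i,j=1}^N P(B_{τ(i)} ∩ B_{τ(j)})) ≤ sup_{ω ∈ ℝ^m} (∑_i ω_i P(A_i))² / (∑_{i,j} ω_i ω_j P(A_i ∩ A_j)). -/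
/-!
Every term of the Erdős–Rényi sequence is itself one of the Gallot–Kounias ratios: since
`B (τ k) = A (g k)` for an index map `g`, grouping the sums by the value of `g` turns them into the
Gallot–Kounias numerator and denominator with weights `ωᵢ = #{k ≤ N | g k = i}`. Those ratios are
bounded by `1`, because `(∑ ωᵢ P(Aᵢ))² ≤ ∑ ωᵢ ωⱼ P(Aᵢ ∩ Aⱼ)` is `(E f)² ≤ E f²` for
`f = ∑ ωᵢ 1_{Aᵢ}`, so the supremum bounds every term and hence the limsup.
-/

open MeasureTheory Filter Set
open scoped Finset

theorem Finset.sum_comp_eq_sum_card_filter_mul {κ ι R : Type*} [Fintype ι] [DecidableEq ι]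
    [NonAssocSemiring R] (s : Finset κ) (g : κ → ι) (f : ι → R) :
    ∑ k ∈ s, f (g k) = ∑ i, (#{k ∈ s | g k = i} : R) * f i := by
  simp only [← sum_fiberwise' s g f, sum_const, nsmul_eq_mul]

theorem Finset.sum_sum_comp_eq_sum_sum_card_filter_mul {κ ι R : Type*} [Fintype ι]
    [DecidableEq ι] [CommSemiring R] (s : Finset κ) (g : κ → ι) (f : ι → ι → R) :
    ∑ k ∈ s, ∑ l ∈ s, f (g k) (g l)
      = ∑ i, ∑ j, (#{k ∈ s | g k = i} : R) * #{k ∈ s | g k = j} * f i j := by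
  set c : ι → R := fun i => #{k ∈ s | g k = i}
  calc ∑ k ∈ s, ∑ l ∈ s, f (g k) (g l)
      = ∑ j, c j * ∑ k ∈ s, f (g k) j := by
        simp only [sum_comp_eq_sum_card_filter_mul s g (f _), mul_sum]
        exact sum_comm
    _ = ∑ j, c j * ∑ i, c i * f i j :=
        sum_congr rfl fun j _ => by rw [sum_comp_eq_sum_card_filter_mul s g (f · j)]
    _ = ∑ i, ∑ j, c i * c j * f i j := by
        rw [sum_comm]
        simp only [mul_sum, mul_left_comm, mul_assoc]

section

variable {Ω ι : Type*} [MeasurableSpace Ω] {μ : Measure Ω}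

theorem sq_integral_le_integral_sq [IsProbabilityMeasure μ] {f : Ω → ℝ} (hf : MemLp f 2 μ) :
    (∫ x, f x ∂μ) ^ 2 ≤ ∫ x, f x ^ 2 ∂μ := by
  have hvar := ProbabilityTheory.variance_nonneg f μ
  rw [ProbabilityTheory.variance_eq_sub hf, sub_nonneg] at hvar
  simpa using hvar

theorem sq_sum_mul_measureReal_le_sum_sum [IsProbabilityMeasure μ] [Fintype ι]
    {A : ι → Set Ω} (hA : ∀ i, MeasurableSet (A i)) (ω : ι → ℝ) :
    (∑ i, ω i * μ.real (A i)) ^ 2 ≤ ∑ i, ∑ j, ω i * ω j * μ.real (A i ∩ A j) := by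
  have hind : ∀ (c : ℝ) {s : Set Ω}, MeasurableSet s → Integrable (s.indicator fun _ => c) μ :=
    fun c s hs => (integrable_indicator_iff hs).2 (integrableOn_const (measure_ne_top μ _))
  set f : Ω → ℝ := fun x => ∑ i, (A i).indicator (fun _ => ω i) x
  have hf : MemLp f 2 μ := memLp_finsetSum _ fun i _ =>
    memLp_indicator_const 2 (hA i) (ω i) (Or.inr (measure_ne_top μ _))
  have hmean : ∫ x, f x ∂μ = ∑ i, ω i * μ.real (A i) := by
    rw [integral_finsetSum _ fun i _ => hind _ (hA i)]
    simp only [integral_indicator_const _ (hA _), smul_eq_mul, mul_comm]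
  have hsq : ∫ x, f x ^ 2 ∂μ = ∑ i, ∑ j, ω i * ω j * μ.real (A i ∩ A j) := by
    simp only [f, sq, Finset.sum_mul_sum, ← Set.inter_indicator_mul]
    rw [integral_finsetSum _ fun i _ => integrable_finsetSum _ fun j _ =>
      hind _ ((hA i).inter (hA j))]
    refine Finset.sum_congr rfl fun i _ => ?_
    rw [integral_finsetSum _ fun j _ => hind _ ((hA i).inter (hA j))]
    simp only [integral_indicator_const _ ((hA i).inter (hA _)), smul_eq_mul, mul_comm]
  rw [← hmean, ← hsq]
  exact sq_integral_le_integral_sq hf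

variable [Fintype ι]

noncomputable def gallotKouniasRatio (μ : Measure Ω) (A : ι → Set Ω) (ω : ι → ℝ) : ℝ :=
  (∑ i, ω i * μ.real (A i)) ^ 2 / ∑ i, ∑ j, ω i * ω j * μ.real (A i ∩ A j)

theorem gallotKouniasRatio_le_one [IsProbabilityMeasure μ] {A : ι → Set Ω}
    (hA : ∀ i, MeasurableSet (A i)) (ω : ι → ℝ) : gallotKouniasRatio μ A ω ≤ 1 :=
  have h := sq_sum_mul_measureReal_le_sum_sum (μ := μ) hA ω
  div_le_one_of_le₀ h ((sq_nonneg _).trans h)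

theorem sq_sum_div_sum_sum_comp_eq_gallotKouniasRatio {κ : Type*} [DecidableEq ι]
    (A : ι → Set Ω) (s : Finset κ) (g : κ → ι) :
    (∑ k ∈ s, μ.real (A (g k))) ^ 2 / ∑ k ∈ s, ∑ l ∈ s, μ.real (A (g k) ∩ A (g l))
      = gallotKouniasRatio μ A fun i => #{k ∈ s | g k = i} := by
  rw [gallotKouniasRatio, Finset.sum_comp_eq_sum_card_filter_mul s g (fun i => μ.real (A i)),
    Finset.sum_sum_comp_eq_sum_sum_card_filter_mul s g (fun i j => μ.real (A i ∩ A j))]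

end

theorem periodic_ER_subsequence_le_GK_general {Ω : Type*} [MeasurableSpace Ω] (μ : Measure Ω)
    [IsProbabilityMeasure μ] (m : ℕ) (hm : 0 < m) (A : Fin m → Set Ω)
    (hA : ∀ i, MeasurableSet (A i))
    (B : ℕ → Set Ω) (hB : ∀ n, B n = A ⟨(n - 1) % m, Nat.mod_lt _ hm⟩)
    (τ : ℕ → ℕ) :
    Filter.limsup (fun N =>
        (∑ k ∈ Finset.Icc 1 N, (μ (B (τ k))).toReal) ^ 2 /
          (∑ i ∈ Finset.Icc 1 N, ∑ j ∈ Finset.Icc 1 N,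
            (μ (B (τ i) ∩ B (τ j))).toReal)) atTop ≤
      sSup {x : ℝ | ∃ ω : Fin m → ℝ,
        x = (∑ i, ω i * (μ (A i)).toReal) ^ 2 /
          (∑ i, ∑ j, ω i * ω j * (μ (A i ∩ A j)).toReal)} := by
  have hbdd : BddAbove {x : ℝ | ∃ ω : Fin m → ℝ, x = gallotKouniasRatio μ A ω} := by
    refine ⟨1, ?_⟩
    rintro _ ⟨ω, rfl⟩
    exact gallotKouniasRatio_le_one hA ω
  let g : ℕ → Fin m := fun k => ⟨(τ k - 1) % m, Nat.mod_lt _ hm⟩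
  refine limsup_le_of_le (isCoboundedUnder_le_of_le atTop fun N => by positivity)
    (Eventually.of_forall fun N => le_csSup hbdd ⟨fun i => #{k ∈ Finset.Icc 1 N | g k = i}, ?_⟩)
  simp only [hB]
  exact sq_sum_div_sum_sum_comp_eq_gallotKouniasRatio A (Finset.Icc 1 N) g

theorem periodic_ER_subsequence_le_GK {Ω : Type*} [MeasurableSpace Ω] (μ : Measure Ω)
    [IsProbabilityMeasure μ] (m : ℕ) (hm : 0 < m) (A : Fin m → Set Ω)
    (hA : ∀ i, MeasurableSet (A i)) (hpos : ∀ i, 0 < μ (A i))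
    (B : ℕ → Set Ω) (hB : ∀ n, B n = A ⟨(n - 1) % m, Nat.mod_lt _ hm⟩)
    (τ : ℕ → ℕ) (hτ : StrictMono τ) (hτ1 : ∀ n, 1 ≤ τ n)
    (hdiv : Tendsto (fun N => ∑ k ∈ Finset.Icc 1 N, (μ (B (τ k))).toReal) atTop atTop) :
    Filter.limsup (fun N =>
        (∑ k ∈ Finset.Icc 1 N, (μ (B (τ k))).toReal) ^ 2 /
          (∑ i ∈ Finset.Icc 1 N, ∑ j ∈ Finset.Icc 1 N,
            (μ (B (τ i) ∩ B (τ j))).toReal)) atTop ≤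
      sSup {x : ℝ | ∃ ω : Fin m → ℝ,
        x = (∑ i, ω i * (μ (A i)).toReal) ^ 2 /
          (∑ i, ∑ j, ω i * ω j * (μ (A i ∩ A j)).toReal)} :=
  periodic_ER_subsequence_le_GK_general μ m hm A hA B hB τ
end

section
/- There exist finitely many events A_1,…,A_m with positive probabilities in a probability space such that GK({A_i}_{i=1}^m) < KAT({A_i}_{i=1}^m), i.e., the Gallot–Kounias lower bound for P(⋃ A_i) is strictly smaller than the Kuai–Alajaji–Takahara lower bound. -/
open MeasureTheory Filter Set

/-!
Take the uniform measure on `{0, 1, 2}` and the events `{0, 1}`, `{1, 2}`, so that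
`P(A₁) = P(A₂) = 2/3` and `P(A₁ ∩ A₂) = 1/3`. For two events of equal probability `p` meeting in
probability `r`, the Gallot–Kounias quotient is at most `2p² / (p + r)` because the difference of
the cleared-out sides is `p² (p - r) (ω₁ - ω₂)²`; here this gives `GK ≤ 8/9`. On the other hand
`S_i / P(A_i) = 3/2` for both events, and the Kuai–Alajaji–Takahara bound evaluates to
`1 = P(A₁ ∪ A₂)`.
-/

open ProbabilityTheory

variable {Ω : Type*} [MeasurableSpace Ω]

noncomputable def gkRatio {m : ℕ} (μ : Measure Ω) (A : Fin m → Set Ω) (ω : Fin m → ℝ) : ℝ :=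
  (∑ i, ω i * (μ (A i)).toReal) ^ 2 / (∑ i, ∑ j, ω i * ω j * (μ (A i ∩ A j)).toReal)

/-- The `i`-th summand of the KAT bound, with `p = P(A_i)` and `s = S_i`. -/
noncomputable def katTerm (p s : ℝ) : ℝ :=
  Int.fract (s / p) * p ^ 2 / (s + (1 - Int.fract (s / p)) * p) +
    (1 - Int.fract (s / p)) * p ^ 2 / (s - Int.fract (s / p) * p)

theorem katTerm_eq {p : ℝ} (hp : 0 < p) (s : ℝ) :
    katTerm p s = Int.fract (s / p) * p / (⌊s / p⌋ + 1) + (1 - Int.fract (s / p)) * p / ⌊s / p⌋ := by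
  have hs : s = p * (⌊s / p⌋ + Int.fract (s / p)) := by
    rw [Int.floor_add_fract, mul_div_cancel₀ s hp.ne']
  have hup : s + (1 - Int.fract (s / p)) * p = (⌊s / p⌋ + 1) * p := by
    nth_rw 1 [hs]; ring
  have hdown : s - Int.fract (s / p) * p = ⌊s / p⌋ * p := by
    nth_rw 1 [hs]; ring
  rw [katTerm, hup, hdown, sq, ← mul_assoc, ← mul_assoc, mul_div_mul_right _ _ hp.ne',
    mul_div_mul_right _ _ hp.ne']

theorem two_event_quadratic_le {p r : ℝ} (hrp : r ≤ p) (a b : ℝ) :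
    (a * p + b * p) ^ 2 * (p + r) ≤ 2 * p ^ 2 * (a * a * p + a * b * r + (b * a * r + b * b * p)) := by
  have key : 2 * p ^ 2 * (a * a * p + a * b * r + (b * a * r + b * b * p)) - (a * p + b * p) ^ 2 * (p + r)
      = p ^ 2 * (p - r) * (a - b) ^ 2 := by ring
  have hpr : 0 ≤ p - r := sub_nonneg.2 hrp
  have : 0 ≤ p ^ 2 * (p - r) * (a - b) ^ 2 := by positivity
  linarith

section TwoEvents

variable (μ : Measure Ω) (A : Fin 2 → Set Ω)

theorem sum_measure_inter_two (i : Fin 2) :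
    ∑ j, (μ (A i ∩ A j)).toReal = (μ (A i)).toReal + (μ (A 0 ∩ A 1)).toReal := by
  fin_cases i <;> simp [Fin.sum_univ_two, inter_comm (A 1) (A 0), add_comm]

variable [IsFiniteMeasure μ]

theorem gkRatio_two_le (hA : (μ (A 1)).toReal = (μ (A 0)).toReal) (hA0 : 0 < (μ (A 0)).toReal)
    (ω : Fin 2 → ℝ) :
    gkRatio μ A ω ≤
      2 * (μ (A 0)).toReal ^ 2 / ((μ (A 0)).toReal + (μ (A 0 ∩ A 1)).toReal) := by
  set p := (μ (A 0)).toReal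
  set r := (μ (A 0 ∩ A 1)).toReal
  have hrp : r ≤ p := ENNReal.toReal_mono (measure_ne_top μ _) (measure_mono inter_subset_left)
  have hr : 0 ≤ r := ENNReal.toReal_nonneg
  simp only [gkRatio, Fin.sum_univ_two, inter_self, inter_comm (A 1) (A 0), hA]
  rcases le_or_gt (ω 0 * ω 0 * p + ω 0 * ω 1 * r + (ω 1 * ω 0 * r + ω 1 * ω 1 * p)) 0 with hD | hD
  · exact (div_nonpos_of_nonneg_of_nonpos (sq_nonneg _) hD).trans (by positivity)
  · rw [div_le_div_iff₀ hD (by positivity)]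
    exact two_event_quadratic_le hrp _ _

theorem sSup_gkRatio_two_le (hA : (μ (A 1)).toReal = (μ (A 0)).toReal)
    (hA0 : 0 < (μ (A 0)).toReal) :
    sSup {x | ∃ ω, x = gkRatio μ A ω} ≤
      2 * (μ (A 0)).toReal ^ 2 / ((μ (A 0)).toReal + (μ (A 0 ∩ A 1)).toReal) :=
  Real.sSup_le (by rintro _ ⟨ω, rfl⟩; exact gkRatio_two_le μ A hA hA0 ω) (by positivity)

end TwoEvents

theorem uniformOn_univ_finset_toReal [Fintype Ω] [MeasurableSingletonClass Ω] (s : Finset Ω) :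
    (uniformOn univ (s : Set Ω)).toReal = s.card / Fintype.card Ω := by
  simp [uniformOn_univ, Measure.count_apply_finset, ENNReal.toReal_div]

theorem exists_GK_lt_KAT :
    ∃ (Ω : Type) (_ : MeasurableSpace Ω) (μ : Measure Ω) (_ : IsProbabilityMeasure μ)
      (m : ℕ) (A : Fin m → Set Ω),
      (∀ i, MeasurableSet (A i)) ∧ (∀ i, 0 < μ (A i)) ∧
      sSup {x : ℝ | ∃ ω : Fin m → ℝ,
          x = (∑ i, ω i * (μ (A i)).toReal) ^ 2 /
            (∑ i, ∑ j, ω i * ω j * (μ (A i ∩ A j)).toReal)} <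
        ∑ i,
          (Int.fract ((∑ j, (μ (A i ∩ A j)).toReal) / (μ (A i)).toReal) *
              (μ (A i)).toReal ^ 2 /
            ((∑ j, (μ (A i ∩ A j)).toReal) +
              (1 - Int.fract ((∑ j, (μ (A i ∩ A j)).toReal) / (μ (A i)).toReal)) *
                (μ (A i)).toReal) +
          (1 - Int.fract ((∑ j, (μ (A i ∩ A j)).toReal) / (μ (A i)).toReal)) *
              (μ (A i)).toReal ^ 2 /
            ((∑ j, (μ (A i ∩ A j)).toReal) -
              Int.fract ((∑ j, (μ (A i ∩ A j)).toReal) / (μ (A i)).toReal) *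
                (μ (A i)).toReal)) := by
  let E : Fin 2 → Finset (Fin 3) := ![{0, 1}, {1, 2}]
  let A : Fin 2 → Set (Fin 3) := fun i => E i
  let μ : Measure (Fin 3) := uniformOn univ
  have hP : ∀ i, (μ (A i)).toReal = 2 / 3 := by
    intro i; rw [uniformOn_univ_finset_toReal]; fin_cases i <;> simp [E]
  have hR : (μ (A 0 ∩ A 1)).toReal = 1 / 3 := by
    rw [← Finset.coe_inter, uniformOn_univ_finset_toReal]; simp [E]
  have hS : ∀ i, ∑ j, (μ (A i ∩ A j)).toReal = 1 := by
    intro i; rw [sum_measure_inter_two, hP, hR]; norm_num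
  have hKAT : katTerm (2 / 3) 1 = 1 / 2 := by
    have hfloor : ⌊(3 / 2 : ℝ)⌋ = 1 := Int.floor_eq_iff.2 (by norm_num)
    rw [katTerm_eq (by norm_num), show (1 : ℝ) / (2 / 3) = 3 / 2 by norm_num, Int.fract, hfloor]
    norm_num
  refine ⟨Fin 3, inferInstance, μ, inferInstance, 2, A, fun _ => .of_discrete,
    fun i => (ENNReal.toReal_pos_iff.1 (by rw [hP]; norm_num)).1, ?_⟩
  calc sSup {x | ∃ ω, x = gkRatio μ A ω}
      ≤ 2 * (2 / 3) ^ 2 / (2 / 3 + 1 / 3) := by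
        simpa only [hP, hR] using sSup_gkRatio_two_le μ A (by rw [hP, hP]) (by rw [hP]; norm_num)
    _ < ∑ i : Fin 2, katTerm (2 / 3) 1 := by rw [Fin.sum_const, hKAT]; norm_num
    _ = ∑ i, katTerm (μ (A i)).toReal (∑ j, (μ (A i ∩ A j)).toReal) := by simp only [hP, hS]
end

section
/- Let (Ω,P) be a probability space and A_1, …, A_m events. For any random vector of weights, the quadratic form ∑_{i,j} ω_i ω_j P(A_i ∩ A_j) equals E[(∑_i ω_i 1_{A_i})²], and by Cauchy–Schwarz applied on the event ⋃_i A_i, (∑_i ω_i P(A_i))² ≤ P(⋃_{i=1}^m A_i) · ∑_{i,j} ω_i ω_j P(A_i ∩ A_j) for every (ω_1,…,ω_m) ∈ ℝ^m. -/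
/-!
Expanding the square of `f = ∑ i, ω i • 1_{A i}` gives the quadratic form, by `1_{A i} 1_{A j} = 1_{A i ∩ A j}`.
Since `f` vanishes off `s = ⋃ i, A i`, the quadratic `t ↦ ∫ (t 1_s - f)² = μ(s) t² - 2 t ∫ f + ∫ f²` is
nonnegative, so its discriminant `(∫ f)² - μ(s) ∫ f²` is nonpositive.
-/

open MeasureTheory Set

section

variable {α ι : Type*}

theorem sq_sum_mul_indicator_one [Fintype ι] (ω : ι → ℝ) (A : ι → Set α) (x : α) :
    (∑ i, ω i * (A i).indicator (1 : α → ℝ) x) ^ 2 =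
      ∑ p : ι × ι, ω p.1 * ω p.2 * (A p.1 ∩ A p.2).indicator (1 : α → ℝ) x := by
  rw [sq, Finset.sum_mul_sum, ← Finset.sum_product', Finset.univ_product_univ]
  refine Finset.sum_congr rfl fun p _ => ?_
  rw [inter_indicator_one, Pi.mul_apply]
  ring

variable [MeasurableSpace α] {μ : Measure α}

theorem sq_integral_le_measureReal_mul_integral_sq [IsFiniteMeasure μ] {s : Set α}
    (hs : MeasurableSet s) {f : α → ℝ} (hf : Integrable f μ)
    (hf2 : Integrable (fun x => f x ^ 2) μ) (hfs : ∀ x ∉ s, f x = 0) :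
    (∫ x, f x ∂μ) ^ 2 ≤ μ.real s * ∫ x, f x ^ 2 ∂μ := by
  have h1s : Integrable (s.indicator (1 : α → ℝ)) μ := (integrable_const 1).indicator hs
  have hexpand (t : ℝ) (x : α) : (t * s.indicator 1 x - f x) ^ 2 =
      t * t * s.indicator 1 x + -2 * t * f x + f x ^ 2 := by
    by_cases hx : x ∈ s
    · simp only [indicator_of_mem hx, Pi.one_apply]; ring
    · simp only [indicator_of_notMem hx, hfs x hx]; ring
  have hquad (t : ℝ) :
      0 ≤ μ.real s * (t * t) + (-2 * ∫ x, f x ∂μ) * t + ∫ x, f x ^ 2 ∂μ := by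
    calc 0 ≤ ∫ x, (t * s.indicator 1 x - f x) ^ 2 ∂μ := integral_nonneg fun x => sq_nonneg _
      _ = ∫ x, t * t * s.indicator 1 x + -2 * t * f x + f x ^ 2 ∂μ := by simp only [hexpand]
      _ = μ.real s * (t * t) + (-2 * ∫ x, f x ∂μ) * t + ∫ x, f x ^ 2 ∂μ := by
        rw [integral_add _ hf2, integral_add (h1s.const_mul _) (hf.const_mul _),
          integral_const_mul, integral_const_mul, integral_indicator_one hs]
        · ring
        · exact (h1s.const_mul _).add (hf.const_mul _)
  have hdiscrim := discrim_le_zero hquad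
  rw [discrim] at hdiscrim
  linarith

variable [IsFiniteMeasure μ] [Fintype ι] {A : ι → Set α}

theorem integrable_sum_mul_indicator_one (hA : ∀ i, MeasurableSet (A i)) (ω : ι → ℝ) :
    Integrable (fun x => ∑ i, ω i * (A i).indicator (1 : α → ℝ) x) μ :=
  integrable_finsetSum _ fun i _ => ((integrable_const (1 : ℝ)).indicator (hA i)).const_mul (ω i)

theorem integral_sum_mul_indicator_one (hA : ∀ i, MeasurableSet (A i)) (ω : ι → ℝ) :
    ∫ x, ∑ i, ω i * (A i).indicator (1 : α → ℝ) x ∂μ = ∑ i, ω i * μ.real (A i) := by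
  rw [integral_finsetSum]
  · simp only [integral_const_mul, integral_indicator_one (hA _)]
  · exact fun i _ => ((integrable_const (1 : ℝ)).indicator (hA i)).const_mul (ω i)

theorem integral_sq_sum_mul_indicator_one (hA : ∀ i, MeasurableSet (A i)) (ω : ι → ℝ) :
    ∫ x, (∑ i, ω i * (A i).indicator (1 : α → ℝ) x) ^ 2 ∂μ =
      ∑ i, ∑ j, ω i * ω j * μ.real (A i ∩ A j) := by
  simp only [sq_sum_mul_indicator_one]
  rw [integral_sum_mul_indicator_one (A := fun p : ι × ι => A p.1 ∩ A p.2)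
    (fun p => (hA p.1).inter (hA p.2)), Fintype.sum_prod_type]

theorem integrable_sq_sum_mul_indicator_one (hA : ∀ i, MeasurableSet (A i)) (ω : ι → ℝ) :
    Integrable (fun x => (∑ i, ω i * (A i).indicator (1 : α → ℝ) x) ^ 2) μ := by
  simp only [sq_sum_mul_indicator_one]
  exact integrable_sum_mul_indicator_one (A := fun p : ι × ι => A p.1 ∩ A p.2)
    (fun p => (hA p.1).inter (hA p.2)) _

end

theorem quadratic_form_and_cauchy_schwarz {Ω : Type*} [MeasurableSpace Ω] (μ : Measure Ω)
    [IsProbabilityMeasure μ] (m : ℕ) (A : Fin m → Set Ω)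
    (hA : ∀ i, MeasurableSet (A i)) (ω : Fin m → ℝ) :
    (∑ i, ∑ j, ω i * ω j * (μ (A i ∩ A j)).toReal) =
        ∫ x, (∑ i, ω i * (A i).indicator (1 : Ω → ℝ) x) ^ 2 ∂μ ∧
      (∑ i, ω i * (μ (A i)).toReal) ^ 2 ≤
        (μ (⋃ i, A i)).toReal * ∑ i, ∑ j, ω i * ω j * (μ (A i ∩ A j)).toReal := by
  have hquad := integral_sq_sum_mul_indicator_one (μ := μ) hA ω
  refine ⟨hquad.symm, ?_⟩
  have hvanish : ∀ x ∉ ⋃ i, A i, ∑ i, ω i * (A i).indicator (1 : Ω → ℝ) x = 0 := by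
    intro x hx
    simp only [mem_iUnion, not_exists] at hx
    simp [indicator_of_notMem (hx _)]
  have hcs := sq_integral_le_measureReal_mul_integral_sq (μ := μ) (MeasurableSet.iUnion hA)
    (integrable_sum_mul_indicator_one hA ω) (integrable_sq_sum_mul_indicator_one hA ω) hvanish
  rwa [integral_sum_mul_indicator_one hA, hquad] at hcs
end
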